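/- arXiv:2507.12025 — 5 statements merged into one kernel-verified Lean document; each statement's English description precedes it below -/
import Mathlib

section
/- Let Sh_c({0,1}) be the color shuffle of two colors and let L = η_0 + 1_0 + Sh_c({0,1}), where η_0 is a dense ordering without endpoints all of whose elements have color 0, and 1_0 is a single point p of color 0. Then for any q in the initial η_0 part, (L, q) ≤_2 (L, p); in particular, the automorphism orbit of p is not definable by an existential (Σ_2-level) condition determined by 2-round back-and-forth equivalence. -/
universe u

/-- Two tuples in colored linear orders have the same quantifier-free type:
same length, same relative order, and same colors. -/
def SameQF {M : Type u} {N : Type u} [LinearOrder M] [LinearOrder N]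
    (cM : M → ℕ) (cN : N → ℕ) (as : List M) (bs : List N) : Prop :=
  ∃ h : as.length = bs.length,
    ∀ i j : Fin as.length,
      (as.get i ≤ as.get j ↔ bs.get (Fin.cast h i) ≤ bs.get (Fin.cast h j)) ∧
      cM (as.get i) = cN (bs.get (Fin.cast h i))

/-- The standard asymmetric back-and-forth relations for colored linear orders.
`BF cM cN α as bs` means `(M, as) ≤_α (N, bs)`. -/
def BF {M : Type u} {N : Type u} [LinearOrder M] [LinearOrder N]
    (cM : M → ℕ) (cN : N → ℕ) (α : Ordinal.{0}) (as : List M) (bs : List N) : Prop :=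
  (α = 0 → SameQF cM cN as bs) ∧
  (∀ β : Ordinal.{0}, β < α → ∀ ds : List N, ∃ es : List M,
    BF cN cM β (bs ++ ds) (as ++ es))
termination_by α
decreasing_by exact ‹β < α›

/-- A colored linear order `(L, c)` is a color shuffle of the set of colors `A`:
it has the order type of the rationals and each color in `A` occurs densely,
while only colors from `A` occur. -/
structure IsColorShuffle {L : Type u} [LinearOrder L] (c : L → ℕ) (A : Set ℕ) : Prop where
  countable : Countable L
  nonempty : Nonempty L
  colors_mem : ∀ x : L, c x ∈ A
  dense_color : ∀ a b : L, a < b → ∀ i ∈ A, ∃ q : L, a < q ∧ q < b ∧ c q = i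
  no_min : ∀ a : L, ∃ b : L, b < a
  no_max : ∀ a : L, ∃ b : L, a < b

lemma sameQF_map' {M : Type} [LinearOrder M] (cM : M → ℕ) (θ : M → M) (xs : List M)
    (h : ∀ x ∈ xs, ∀ y ∈ xs, (x ≤ y ↔ θ x ≤ θ y) ∧ cM (θ x) = cM x) :
    SameQF cM cM xs (xs.map θ) := by
  refine ⟨(List.length_map (as := xs) θ).symm, fun i j => ?_⟩
  have hi : xs.get i ∈ xs := xs.get_mem _
  have hj : xs.get j ∈ xs := xs.get_mem _
  have e1 : (xs.map θ).get (Fin.cast (List.length_map (as := xs) θ).symm i) = θ (xs.get i) := by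
    simp [List.get_eq_getElem]
  have e2 : (xs.map θ).get (Fin.cast (List.length_map (as := xs) θ).symm j) = θ (xs.get j) := by
    simp [List.get_eq_getElem]
  rw [e1, e2]
  exact ⟨(h _ hi _ hj).1, (h _ hi _ hi).2.symm⟩

lemma foldr_min_gt {L : Type} [LinearOrder L] {p a₀ : L} (h0 : p < a₀) :
    ∀ l : List L, (∀ x ∈ l, p < x) → p < l.foldr min a₀ := by
  intro l
  induction l with
  | nil => intro _; exact h0
  | cons a l ih =>
    intro h
    have : p < min a (l.foldr min a₀) :=
      lt_min (h a List.mem_cons_self) (ih fun x hx => h x (List.mem_cons_of_mem a hx))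
    simpa using this

lemma foldr_min_le {L : Type} [LinearOrder L] (a₀ : L) :
    ∀ (l : List L) (x : L), x ∈ l → l.foldr min a₀ ≤ x := by
  intro l
  induction l with
  | nil => intro x hx; cases hx
  | cons a l ih =>
    intro x hx
    rcases List.mem_cons.mp hx with rfl | hx
    · exact min_le_left _ _
    · exact le_trans (min_le_right _ _) (ih x hx)

/-- existence of increasing color-0 chains above `p`, below `u` -/
lemma exists_chain {L : Type} [LinearOrder L] (cL : L → ℕ) (p : L)
    (habove : IsColorShuffle (fun x : ↥{x : L | p < x} => cL x.val) ({0, 1} : Set ℕ)) :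
    ∀ (n : ℕ) (l u : L), p ≤ l → l < u →
      ∃ ts : List L, ts.length = n ∧ ts.Pairwise (· < ·) ∧
        ∀ t ∈ ts, l < t ∧ t < u ∧ cL t = 0 := by
  have pick0 : ∀ l u : L, p ≤ l → l < u → ∃ t : L, l < t ∧ t < u ∧ cL t = 0 := by
    intro l u hl hlu
    rcases hl.lt_or_eq with hpl | rfl
    · have hu : p < u := hpl.trans hlu
      obtain ⟨t, h1, h2, h3⟩ := habove.dense_color ⟨l, hpl⟩ ⟨u, hu⟩
        (Subtype.mk_lt_mk.mpr hlu) 0 (Or.inl rfl)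
      exact ⟨t.1, Subtype.mk_lt_mk.mp h1, Subtype.mk_lt_mk.mp h2, h3⟩
    · obtain ⟨a, ha⟩ := habove.no_min ⟨u, hlu⟩
      obtain ⟨t, h1, h2, h3⟩ := habove.dense_color a ⟨u, hlu⟩ ha 0 (Or.inl rfl)
      exact ⟨t.1, lt_trans a.2 (Subtype.coe_lt_coe.mpr h1), Subtype.mk_lt_mk.mp h2, h3⟩
  intro n
  induction n with
  | zero => exact fun l u _ _ => ⟨[], rfl, List.Pairwise.nil, by intro t ht; cases ht⟩
  | succ n ih =>
    intro l u hl hlu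
    obtain ⟨t, hlt, htu, htc⟩ := pick0 l u hl hlu
    obtain ⟨ts, hlen, hpw, hmem⟩ := ih t u (hl.trans hlt.le) htu
    refine ⟨t :: ts, by simp [hlen], List.pairwise_cons.mpr ⟨fun y hy => (hmem y hy).1, hpw⟩, ?_⟩
    intro x hx
    rcases List.mem_cons.mp hx with rfl | hx
    · exact ⟨hlt, htu, htc⟩
    · obtain ⟨h1, h2, h3⟩ := hmem x hx
      exact ⟨hlt.trans h1, h2, h3⟩

/-- Let L = η₀ + 1₀ + Sh_c({0,1}): there is a point p of color 0 such that
the part below p is a shuffle of the single color 0 and the part above p is a shuffle of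
the colors {0,1}. Then for every q in the initial η₀ part, (L, q) ≤₂ (L, p); in
particular the orbit of p is not distinguished from such q at back-and-forth level 2. -/
theorem eta_one_shuffle_bf_two {L : Type} [LinearOrder L] (cL : L → ℕ) (p : L)
    (hp : cL p = 0)
    (hbelow : IsColorShuffle (fun x : ↥{x : L | x < p} => cL x.val) ({0} : Set ℕ))
    (habove : IsColorShuffle (fun x : ↥{x : L | p < x} => cL x.val) ({0, 1} : Set ℕ)) :
    ∀ q : L, q < p → BF cL cL 2 [q] [p] := by
  intro q hq
  -- basic color facts
  have colbelow : ∀ x : L, x < p → cL x = 0 := fun x hx => hbelow.colors_mem ⟨x, hx⟩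
  have colle : ∀ x : L, x ≤ p → cL x = 0 := fun x hx =>
    hx.lt_or_eq.elim (colbelow x) (fun h => h ▸ hp)
  -- instances for the CDLO theorem
  haveI : Countable ↥{x : L | x < p} := hbelow.countable
  haveI : Nonempty ↥{x : L | x < p} := hbelow.nonempty
  haveI : DenselyOrdered ↥{x : L | x < p} := ⟨fun a b hab => by
    obtain ⟨t, h1, h2, _⟩ := hbelow.dense_color a b hab 0 rfl
    exact ⟨t, h1, h2⟩⟩
  haveI : NoMinOrder ↥{x : L | x < p} := ⟨fun a => hbelow.no_min a⟩
  haveI : NoMaxOrder ↥{x : L | x < p} := ⟨fun a => hbelow.no_max a⟩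
  haveI : Countable ↥{x : L | x < q} := by
    have hc : Set.Countable {x : L | x < p} := Set.countable_coe_iff.mp hbelow.countable
    exact Set.countable_coe_iff.mpr (hc.mono (fun x hx => lt_trans hx hq))
  haveI : Nonempty ↥{x : L | x < q} := by
    obtain ⟨b, hb⟩ := hbelow.no_min ⟨q, hq⟩
    exact ⟨⟨b.1, Subtype.coe_lt_coe.mpr hb⟩⟩
  haveI : DenselyOrdered ↥{x : L | x < q} := ⟨fun a b hab => by
    obtain ⟨t, h1, h2, _⟩ := hbelow.dense_color ⟨a.1, lt_trans a.2 hq⟩ ⟨b.1, lt_trans b.2 hq⟩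
      (Subtype.mk_lt_mk.mpr (Subtype.coe_lt_coe.mpr hab)) 0 rfl
    refine ⟨⟨t.1, lt_trans (Subtype.mk_lt_mk.mp h2) b.2⟩, ?_, ?_⟩
    · exact Subtype.mk_lt_mk.mpr (Subtype.mk_lt_mk.mp h1)
    · exact Subtype.mk_lt_mk.mpr (Subtype.mk_lt_mk.mp h2)⟩
  haveI : NoMinOrder ↥{x : L | x < q} := ⟨fun a => by
    obtain ⟨b, hb⟩ := hbelow.no_min ⟨a.1, lt_trans a.2 hq⟩
    exact ⟨⟨b.1, lt_trans (Subtype.coe_lt_coe.mpr hb) a.2⟩,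
      Subtype.mk_lt_mk.mpr (Subtype.coe_lt_coe.mpr hb)⟩⟩
  haveI : NoMaxOrder ↥{x : L | x < q} := ⟨fun a => by
    obtain ⟨t, h1, h2, _⟩ := hbelow.dense_color ⟨a.1, lt_trans a.2 hq⟩ ⟨q, hq⟩
      (Subtype.mk_lt_mk.mpr a.2) 0 rfl
    exact ⟨⟨t.1, Subtype.mk_lt_mk.mp h2⟩, Subtype.mk_lt_mk.mpr (Subtype.mk_lt_mk.mp h1)⟩⟩
  obtain ⟨ψ⟩ : Nonempty (↥{x : L | x < p} ≃o ↥{x : L | x < q}) :=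
    Order.iso_of_countable_dense _ _
  -- the round-1 map f
  set f : L → L := fun x => if h : x < p then (ψ ⟨x, h⟩).1 else if x = p then q else x with hf
  have hf_lt : ∀ x (h : x < p), f x = (ψ ⟨x, h⟩).1 := fun x h => dif_pos h
  have hf_ltq : ∀ x, x < p → f x < q := by
    intro x h; rw [hf_lt x h]; exact (ψ ⟨x, h⟩).2
  have hf_p : f p = q := by simp [hf]
  have hf_gt : ∀ x, p < x → f x = x := by
    intro x h
    rw [hf]; simp only []
    rw [dif_neg (not_lt.mpr h.le), if_neg (ne_of_gt h)]
  have hfmono : ∀ x y : L, x < y → f x < f y := by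
    intro x y hxy
    rcases lt_trichotomy x p with hx | rfl | hx
    · rcases lt_trichotomy y p with hy | rfl | hy
      · rw [hf_lt x hx, hf_lt y hy]
        exact Subtype.coe_lt_coe.mpr (ψ.lt_iff_lt.mpr (Subtype.mk_lt_mk.mpr hxy))
      · rw [hf_p]; exact hf_ltq x hx
      · rw [hf_gt y hy]; exact lt_trans (hf_ltq x hx) (lt_trans hq hy)
    · rw [hf_p, hf_gt y hxy]; exact lt_trans hq hxy
    · rw [hf_gt x hx, hf_gt y (hx.trans hxy)]; exact hxy
  have hfle : ∀ x y : L, x ≤ y ↔ f x ≤ f y := by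
    intro x y
    constructor
    · intro h
      rcases h.lt_or_eq with h | rfl
      · exact (hfmono x y h).le
      · exact le_rfl
    · intro h
      by_contra hc
      exact absurd h (not_le.mpr (hfmono y x (not_le.mp hc)))
  have hfc : ∀ x : L, cL (f x) = cL x := by
    intro x
    rcases lt_trichotomy x p with hx | rfl | hx
    · rw [colbelow _ (lt_trans (hf_ltq x hx) hq), colbelow _ hx]
    · rw [hf_p, colbelow _ hq, hp]
    · rw [hf_gt x hx]
  -- assemble BF 2
  rw [BF]
  constructor
  · intro h
    exact absurd h (by norm_num)
  intro β hβ ds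
  have hβ1 : β ≤ 1 := by
    have h2 : β < Order.succ 1 := by rw [← Ordinal.add_one_eq_succ, one_add_one_eq_two]; exact hβ
    exact Order.lt_succ_iff.mp h2
  refine ⟨ds.map f, ?_⟩
  have hlist1 : (q :: ds.map f) = (p :: ds).map f := by rw [List.map_cons, hf_p]
  rw [BF]
  constructor
  · intro _
    show SameQF cL cL (p :: ds) (q :: ds.map f)
    rw [hlist1]
    exact sameQF_map' cL f (p :: ds) (fun x _ y _ => ⟨hfle x y, hfc x⟩)
  intro γ hγ ys
  have hγ0 : γ = 0 := Ordinal.lt_one_iff_zero.mp (lt_of_lt_of_le hγ hβ1)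
  subst hγ0
  -- upper bound u for the replacement interval (p, u)
  obtain ⟨a₀s⟩ := habove.nonempty
  set S : List L := (ds ++ ys).filter (fun x => decide (p < x)) with hS
  have hSmem : ∀ x ∈ S, p < x := by
    intro x hx
    have := List.mem_filter.mp hx
    simpa using this.2
  set u : L := S.foldr min a₀s.1 with hu
  have hu1 : p < u := foldr_min_gt a₀s.2 S hSmem
  have hu2 : ∀ x, x ∈ ds ++ ys → p < x → u ≤ x := by
    intro x hx hpx
    exact foldr_min_le _ S x (List.mem_filter.mpr ⟨hx, by simpa using hpx⟩)
  -- the new points in the critical interval (q, p]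
  set zs : List L := ((ys.filter (fun y => decide (q < y ∧ y ≤ p))).toFinset).sort (· ≤ ·)
    with hzs
  have hzs_mem : ∀ y : L, y ∈ zs ↔ (y ∈ ys ∧ q < y ∧ y ≤ p) := by
    intro y
    rw [hzs, Finset.mem_sort, List.mem_toFinset, List.mem_filter]
    simp
  have hzs_sorted : zs.Pairwise (· < ·) := (Finset.sortedLT_sort _).pairwise
  obtain ⟨ts, hts_len, hts_pw, hts_mem⟩ := exists_chain cL p habove zs.length p u le_rfl hu1
  -- the round-2 matching map θ
  set θ : L → L := fun y => if h : y < q then (ψ.symm ⟨y, h⟩).1 else if y = q then p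
    else if y ≤ p then ts.getD (zs.idxOf y) p else y with hθ
  have hθ_ltq : ∀ y (h : y < q), θ y = (ψ.symm ⟨y, h⟩).1 := fun y h => dif_pos h
  have hθ_ltp : ∀ y, ∀ h : y < q, θ y < p := fun y h => by
    rw [hθ_ltq y h]; exact (ψ.symm ⟨y, h⟩).2
  have hθ_q : θ q = p := by simp [hθ]
  have hθ_gt : ∀ y, p < y → θ y = y := by
    intro y h
    rw [hθ]; simp only []
    rw [dif_neg (not_lt.mpr (lt_trans hq h).le), if_neg (ne_of_gt (lt_trans hq h)),
      if_neg (not_le.mpr h)]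
  have hθ_zsget : ∀ y (hy : y ∈ zs), θ y = ts.get ⟨zs.idxOf y, by
      rw [hts_len]; exact List.idxOf_lt_length_iff.mpr hy⟩ := by
    intro y hy
    obtain ⟨-, h1, h2⟩ := (hzs_mem y).mp hy
    rw [hθ]; simp only []
    rw [dif_neg (not_lt.mpr h1.le), if_neg (ne_of_gt h1), if_pos h2]
    exact List.getD_eq_getElem _ _ _
  have hθ_zsprop : ∀ y ∈ zs, p < θ y ∧ θ y < u ∧ cL (θ y) = 0 := by
    intro y hy
    rw [hθ_zsget y hy]
    exact hts_mem _ (ts.get_mem _)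
  have hθf : ∀ x : L, θ (f x) = x := by
    intro x
    rcases lt_trichotomy x p with hx | rfl | hx
    · have h2 : (ψ ⟨x, hx⟩).1 < q := (ψ ⟨x, hx⟩).2
      rw [hf_lt x hx, hθ_ltq _ h2]
      have h3 : (⟨(ψ ⟨x, hx⟩).1, h2⟩ : ↥{x : L | x < q}) = ψ ⟨x, hx⟩ := Subtype.ext rfl
      rw [h3, ψ.symm_apply_apply]
    · rw [hf_p, hθ_q]
    · rw [hf_gt x hx, hθ_gt x hx]
  -- the list of all relevant points on the source side
  set E : List L := (p :: ds).map f ++ ys with hE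
  have hcond : ∀ x ∈ E, ((¬ (q < x ∧ x ≤ p)) ∨ x ∈ zs) ∧ (p < x → u ≤ x) := by
    intro x hx
    rcases List.mem_append.mp hx with hx | hx
    · obtain ⟨x₀, hx₀, rfl⟩ := List.mem_map.mp hx
      rcases lt_trichotomy x₀ p with h0 | rfl | h0
      · have h1 : f x₀ < q := hf_ltq x₀ h0
        exact ⟨Or.inl (fun hc => absurd h1 (not_lt.mpr hc.1.le)),
          fun hc => absurd hc (not_lt.mpr (lt_trans h1 hq).le)⟩
      · rw [hf_p]
        exact ⟨Or.inl (fun hc => lt_irrefl q hc.1),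
          fun hc => absurd hc (not_lt.mpr hq.le)⟩
      · rw [hf_gt x₀ h0]
        have hx₀ds : x₀ ∈ ds := by
          rcases List.mem_cons.mp hx₀ with rfl | h
          · exact absurd h0 (lt_irrefl _)
          · exact h
        exact ⟨Or.inl (fun hc => absurd hc.2 (not_le.mpr h0)),
          fun _ => hu2 x₀ (List.mem_append.mpr (Or.inl hx₀ds)) h0⟩
    · constructor
      · by_cases hP : q < x ∧ x ≤ p
        · exact Or.inr ((hzs_mem x).mpr ⟨hx, hP⟩)
        · exact Or.inl hP
      · exact fun hpx => hu2 x (List.mem_append.mpr (Or.inr hx)) hpx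
  have region : ∀ z : L, ((¬ (q < z ∧ z ≤ p)) ∨ z ∈ zs) → (z ≤ q ∨ z ∈ zs ∨ p < z) := by
    intro z h
    rcases h with h | h
    · rcases le_or_gt z q with h1 | h1
      · exact Or.inl h1
      · exact Or.inr (Or.inr (by by_contra hc; exact h ⟨h1, not_lt.mp hc⟩))
    · exact Or.inr (Or.inl h)
  have hθ_leq : ∀ z : L, z ≤ q → θ z ≤ p := by
    intro z hz
    rcases hz.lt_or_eq with h | rfl
    · exact (hθ_ltp z h).le
    · rw [hθ_q]
  have hmono : ∀ x ∈ E, ∀ y ∈ E, x < y → θ x < θ y := by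
    intro x hx y hy hxy
    obtain ⟨hx1, hx2⟩ := hcond x hx
    obtain ⟨hy1, hy2⟩ := hcond y hy
    rcases region x hx1 with hxr | hxr | hxr
    · rcases region y hy1 with hyr | hyr | hyr
      · -- both ≤ q
        rcases hyr.lt_or_eq with hy3 | rfl
        · have hx3 : x < q := lt_of_lt_of_le hxy hyr
          rw [hθ_ltq x hx3, hθ_ltq y hy3]
          exact Subtype.coe_lt_coe.mpr (ψ.symm.lt_iff_lt.mpr (Subtype.mk_lt_mk.mpr hxy))
        · rw [hθ_q]
          exact hθ_ltp x hxy
      · exact lt_of_le_of_lt (hθ_leq x hxr) (hθ_zsprop y hyr).1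
      · rw [hθ_gt y hyr]
        exact lt_of_le_of_lt (hθ_leq x hxr) hyr
    · rcases region y hy1 with hyr | hyr | hyr
      · exact absurd (lt_of_lt_of_le hxy hyr) (not_lt.mpr ((hzs_mem x).mp hxr).2.1.le)
      · -- both in zs
        have hix : zs.idxOf x < zs.length := List.idxOf_lt_length_iff.mpr hxr
        have hiy : zs.idxOf y < zs.length := List.idxOf_lt_length_iff.mpr hyr
        have hgx : zs.get ⟨zs.idxOf x, hix⟩ = x := List.idxOf_get hix
        have hgy : zs.get ⟨zs.idxOf y, hiy⟩ = y := List.idxOf_get hiy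
        have hij : zs.idxOf x < zs.idxOf y := by
          rcases lt_trichotomy (zs.idxOf x) (zs.idxOf y) with h | h | h
          · exact h
          · exfalso
            have : x = y := by rw [← hgx, ← hgy]; exact congrArg zs.get (Fin.ext h)
            exact absurd hxy (this ▸ lt_irrefl x)
          · exfalso
            have h5 := (List.pairwise_iff_get.mp hzs_sorted) ⟨zs.idxOf y, hiy⟩
              ⟨zs.idxOf x, hix⟩ (Fin.mk_lt_mk.mpr h)
            rw [hgx, hgy] at h5
            exact absurd hxy (not_lt.mpr h5.le)
        rw [hθ_zsget x hxr, hθ_zsget y hyr]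
        exact (List.pairwise_iff_get.mp hts_pw) ⟨zs.idxOf x, by rw [hts_len]; exact hix⟩
          ⟨zs.idxOf y, by rw [hts_len]; exact hiy⟩ (Fin.mk_lt_mk.mpr hij)
      · rw [hθ_gt y hyr]
        exact lt_of_lt_of_le (hθ_zsprop x hxr).2.1 (hy2 hyr)
    · have hyp : p < y := lt_trans hxr hxy
      rw [hθ_gt x hxr, hθ_gt y hyp]
      exact hxy
  have hθc : ∀ x ∈ E, cL (θ x) = cL x := by
    intro x hx
    rcases region x (hcond x hx).1 with hxr | hxr | hxr
    · rcases hxr.lt_or_eq with h | rfl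
      · rw [colbelow _ (hθ_ltp x h), colbelow _ (lt_trans h hq)]
      · rw [hθ_q, hp, colbelow _ hq]
    · rw [(hθ_zsprop x hxr).2.2, colle x ((hzs_mem x).mp hxr).2.2]
    · rw [hθ_gt x hxr]
  have hiff : ∀ x ∈ E, ∀ y ∈ E, (x ≤ y ↔ θ x ≤ θ y) := by
    intro x hx y hy
    constructor
    · intro h
      rcases h.lt_or_eq with h | rfl
      · exact (hmono x hx y hy h).le
      · exact le_rfl
    · intro h
      by_contra hc
      exact absurd h (not_le.mpr (hmono y hy x hx (not_le.mp hc)))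
  refine ⟨ys.map θ, ?_⟩
  rw [BF]
  refine ⟨fun _ => ?_, fun δ hδ => absurd hδ (not_lt_of_ge (zero_le (a := δ)))⟩
  have hsq := sameQF_map' cL θ E (fun x hx y hy => ⟨hiff x hx y hy, hθc x hx⟩)
  have hE2 : ((q :: ds.map f) ++ ys) = E := by rw [hE, hlist1]
  have hEmap : E.map θ = (p :: ds) ++ ys.map θ := by
    rw [hE, List.map_append, List.map_map]
    congr 1
    rw [show (θ ∘ f) = id from funext hθf, List.map_id]
  show SameQF cL cL ((q :: ds.map f) ++ ys) ((p :: ds) ++ ys.map θ)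
  rw [hE2, ← hEmap]
  exact hsq
end

section
/- Let L_k denote colored linear orderings using at most k colors (k finite, k ≥ 1). If a k-colored linear ordering L omits some finite increasing sequence of colors c_1, ..., c_n (no increasing tuple in L has this color pattern), then L can be written as a finite ordered sum of colored linear orderings each of which uses fewer than k colors (when n ≥ 1 and k ≥ 2). -/
private lemma snoc_strictMono' {n : ℕ} {L : Type} [LinearOrder L] {a : Fin (n+1) → L} {x : L}
    (ha : StrictMono a) (hx : a (Fin.last n) < x) : StrictMono (Fin.snoc a x) := by
  intro i j hij
  induction j using Fin.lastCases with
  | last =>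
    have hi : i ≠ Fin.last (n+1) := ne_of_lt hij
    obtain ⟨i', rfl⟩ := Fin.exists_castSucc_eq.mpr hi
    simp only [Fin.snoc_castSucc, Fin.snoc_last]
    exact lt_of_le_of_lt (ha.monotone (Fin.le_last i')) hx
  | cast j' =>
    have hi : i ≠ Fin.last (n+1) := by
      intro h
      subst h
      exact absurd (lt_of_lt_of_le hij (Fin.le_last _)) (lt_irrefl _)
    obtain ⟨i', rfl⟩ := Fin.exists_castSucc_eq.mpr hi
    simp only [Fin.snoc_castSucc]
    exact ha (Fin.castSucc_lt_castSucc_iff.mp hij)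

private lemma aux_decomp : ∀ (n : ℕ) (L : Type) [LinearOrder L] (c : L → ℕ) (k : ℕ),
    2 ≤ k → (∀ x : L, c x < k) → ∀ cs : Fin (n+1) → ℕ, (∀ i, cs i < k) →
    (¬∃ a : Fin (n+1) → L, StrictMono a ∧ ∀ i, c (a i) = cs i) →
    ∃ (m : ℕ) (f : L → Fin m), Monotone f ∧
      ∀ j : Fin m, ∃ i < k, ∀ x : L, f x = j → c x ≠ i := by
  intro n
  induction n with
  | zero =>
    intro L _ c k hk hcol cs hcs homit
    refine ⟨1, fun _ => 0, monotone_const, fun j => ⟨cs 0, hcs 0, fun x _ hx => ?_⟩⟩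
    refine homit ⟨fun _ => x, fun i j h => absurd h ?_, fun i => ?_⟩
    · rw [Fin.lt_def]
      have hi := i.isLt
      have hj := j.isLt
      omega
    · rw [Fin.fin_one_eq_zero i]
      exact hx
  | succ n ih =>
    intro L _ c k hk hcol cs hcs homit
    classical
    set P : L → Prop := fun x => ∃ a : Fin (n+1) → L, StrictMono a ∧
      (∀ i, c (a i) = cs i.castSucc) ∧ a (Fin.last n) ≤ x with hPdef
    set Q : L → Prop := fun x => ∃ a : Fin (n+1) → L, StrictMono a ∧
      (∀ i, c (a i) = cs i.castSucc) ∧ a (Fin.last n) < x with hQdef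
    have hPup : ∀ x y : L, x ≤ y → P x → P y :=
      fun x y hxy ⟨a, h1, h2, h3⟩ => ⟨a, h1, h2, le_trans h3 hxy⟩
    have hQup : ∀ x y : L, x ≤ y → Q x → Q y :=
      fun x y hxy ⟨a, h1, h2, h3⟩ => ⟨a, h1, h2, lt_of_lt_of_le h3 hxy⟩
    have homit' : ¬∃ a : Fin (n+1) → {x : L // ¬ P x}, StrictMono a ∧
        ∀ i, (fun x : {x : L // ¬ P x} => c x.val) (a i) = cs i.castSucc := by
      rintro ⟨a, ha, hac⟩
      exact (a (Fin.last n)).2 ⟨fun i => (a i).val,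
        fun i j h => Subtype.coe_lt_coe.mpr (ha h), hac, le_refl _⟩
    obtain ⟨m, f', hf'mono, hf'⟩ := ih {x : L // ¬ P x} (fun x => c x.val) k hk
      (fun x => hcol x.val) (fun i => cs i.castSucc) (fun i => hcs _) homit'
    refine ⟨m + 2, fun x => if hx : P x then (if Q x then ⟨m+1, by omega⟩ else ⟨m, by omega⟩)
      else (f' ⟨x, hx⟩).castLE (by omega : m ≤ m + 2), ?_, ?_⟩
    · intro x y hxy
      dsimp only
      by_cases hPy : P y
      · by_cases hQy : Q y
        · rw [dif_pos hPy, if_pos hQy]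
          refine Fin.le_def.mpr ?_
          have hz : ∀ z : Fin (m+2), (z : ℕ) ≤ m + 1 := fun z => by have := z.isLt; omega
          exact hz _
        · have hQx : ¬ Q x := fun h => hQy (hQup x y hxy h)
          rw [dif_pos hPy, if_neg hQy]
          by_cases hPx : P x
          · rw [dif_pos hPx, if_neg hQx]
          · rw [dif_neg hPx]
            refine Fin.le_def.mpr ?_
            have := (f' ⟨x, hPx⟩).isLt
            simp only [Fin.coe_castLE]
            omega
      · have hPx : ¬ P x := fun h => hPy (hPup x y hxy h)
        rw [dif_neg hPy, dif_neg hPx]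
        have h := hf'mono (show (⟨x, hPx⟩ : {x : L // ¬ P x}) ≤ ⟨y, hPy⟩ from hxy)
        rw [Fin.le_def] at h ⊢
        simpa using h
    · intro j
      by_cases hj1 : (j : ℕ) = m + 1
      · refine ⟨cs (Fin.last (n+1)), hcs _, fun x hfx hcx => ?_⟩
        dsimp only at hfx
        have hQx : Q x := by
          by_contra hQx
          by_cases hPx : P x
          · rw [dif_pos hPx, if_neg hQx] at hfx
            apply_fun Fin.val at hfx
            simp at hfx
            omega
          · rw [dif_neg hPx] at hfx
            apply_fun Fin.val at hfx
            have := (f' ⟨x, hPx⟩).isLt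
            simp at hfx
            omega
        obtain ⟨a, ha, hac, hax⟩ := hQx
        refine homit ⟨Fin.snoc a x, snoc_strictMono' ha hax, fun i => ?_⟩
        induction i using Fin.lastCases with
        | last => simpa using hcx
        | cast i' => simpa using hac i'
      · by_cases hj2 : (j : ℕ) = m
        · set v := cs (Fin.last n).castSucc with hv
          refine ⟨if v = 0 then 1 else 0, by split <;> omega, fun x hfx hcx => ?_⟩
          dsimp only at hfx
          have hx : P x ∧ ¬ Q x := by
            by_cases hPx : P x
            · refine ⟨hPx, fun hQx => ?_⟩
              rw [dif_pos hPx, if_pos hQx] at hfx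
              apply_fun Fin.val at hfx
              simp at hfx
              omega
            · rw [dif_neg hPx] at hfx
              apply_fun Fin.val at hfx
              have := (f' ⟨x, hPx⟩).isLt
              simp at hfx
              omega
          obtain ⟨⟨a, ha, hac, hax⟩, hQx⟩ := hx
          have hax' : a (Fin.last n) = x := by
            rcases lt_or_eq_of_le hax with h | h
            · exact absurd ⟨a, ha, hac, h⟩ hQx
            · exact h
          have hcv : c x = v := by rw [← hax']; exact hac _
          rw [hcv] at hcx
          split_ifs at hcx <;> omega
        · have hjm : (j : ℕ) < m := by have := j.isLt; omega
          obtain ⟨i, hi, hpiece⟩ := hf' ⟨(j : ℕ), hjm⟩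
          refine ⟨i, hi, fun x hfx => ?_⟩
          dsimp only at hfx
          have hPx : ¬ P x := by
            intro hPx
            rw [dif_pos hPx] at hfx
            by_cases hQx : Q x
            · rw [if_pos hQx] at hfx
              apply_fun Fin.val at hfx
              simp at hfx
              omega
            · rw [if_neg hQx] at hfx
              apply_fun Fin.val at hfx
              simp at hfx
              omega
          rw [dif_neg hPx] at hfx
          apply_fun Fin.val at hfx
          simp only [Fin.coe_castLE] at hfx
          exact hpiece ⟨x, hPx⟩ (Fin.ext hfx)

/-- If a k-colored linear ordering L (k ≥ 2 finite) omits some finite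
increasing sequence of colors c₁, ..., cₙ (n ≥ 1), then L can be written as a finite
ordered sum of colored linear orderings each using fewer than k colors: there is a
monotone partition of L into finitely many convex pieces, each of which omits at least
one of the k colors. -/
theorem omitting_sequence_gives_decomposition {L : Type} [LinearOrder L]
    (c : L → ℕ) (k n : ℕ) (hk : 2 ≤ k) (hn : 1 ≤ n)
    (hcol : ∀ x : L, c x < k) (cs : Fin n → ℕ) (hcs : ∀ i, cs i < k)
    (homit : ¬∃ a : Fin n → L, StrictMono a ∧ ∀ i, c (a i) = cs i) :
    ∃ (m : ℕ) (f : L → Fin m), Monotone f ∧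
      ∀ j : Fin m, ∃ i < k, ∀ x : L, f x = j → c x ≠ i := by
  cases n with
  | zero => omega
  | succ n => exact aux_decomp n L c k hk hcol cs hcs homit
end

section
/- If every finite sequence of colors from {0, ..., k-1} is realized by some increasing tuple in the k-colored linear ordering L, then L ≤_2 Sh_c(k), where Sh_c(k) is the color shuffle of all k colors. -/
universe u

theorem SameQF.symm' {M N : Type u} [LinearOrder M] [LinearOrder N]
    {cM : M → ℕ} {cN : N → ℕ} {as : List M} {bs : List N}
    (h : SameQF cM cN as bs) : SameQF cN cM bs as := by
  obtain ⟨h, H⟩ := h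
  refine ⟨h.symm, fun i j => ?_⟩
  have := H (Fin.cast h.symm i) (Fin.cast h.symm j)
  simp only [Fin.cast_cast, Fin.cast_eq_self] at this ⊢
  exact ⟨(this.1).symm, (this.2).symm⟩

theorem sameQF_map {M N : Type u} [LinearOrder M] [LinearOrder N]
    (cM : M → ℕ) (cN : N → ℕ) (as : List M) (g : M → N)
    (hord : ∀ a ∈ as, ∀ b ∈ as, (a ≤ b ↔ g a ≤ g b))
    (hc : ∀ a ∈ as, cM a = cN (g a)) :
    SameQF cM cN as (as.map g) := by
  refine ⟨(List.length_map _).symm, fun i j => ?_⟩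
  have hi : (as.map g).get (Fin.cast (List.length_map (as := as) g).symm i) = g (as.get i) := by
    simp [List.get_eq_getElem]
  have hj : (as.map g).get (Fin.cast (List.length_map (as := as) g).symm j) = g (as.get j) := by
    simp [List.get_eq_getElem]
  rw [hi, hj]
  exact ⟨hord _ (as.get_mem ..) _ (as.get_mem ..), hc _ (as.get_mem ..)⟩

theorem sameQF_append_single {M N : Type u} [LinearOrder M] [LinearOrder N]
    {cM : M → ℕ} {cN : N → ℕ} {as : List M} {bs : List N}
    (h : SameQF cM cN as bs) (x : M) (y : N)
    (hx : ∀ (hl : as.length = bs.length) (i : Fin as.length),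
      (as.get i ≤ x ↔ bs.get (Fin.cast hl i) ≤ y) ∧
      (x ≤ as.get i ↔ y ≤ bs.get (Fin.cast hl i)))
    (hc : cM x = cN y) :
    SameQF cM cN (as ++ [x]) (bs ++ [y]) := by
  obtain ⟨hl, H⟩ := h
  have hlen : (as ++ [x]).length = (bs ++ [y]).length := by simp [hl]
  refine ⟨hlen, fun i j => ?_⟩
  have key : ∀ (p : Fin (as ++ [x]).length),
      (p.1 < as.length ∧ ∃ hp : p.1 < as.length,
        (as ++ [x]).get p = as.get ⟨p.1, hp⟩ ∧
        (bs ++ [y]).get (Fin.cast hlen p) = bs.get (Fin.cast hl ⟨p.1, hp⟩)) ∨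
      (p.1 = as.length ∧ (as ++ [x]).get p = x ∧ (bs ++ [y]).get (Fin.cast hlen p) = y) := by
    intro p
    have hp2 := p.2
    simp only [List.length_append, List.length_singleton] at hp2
    rcases lt_or_eq_of_le (Nat.lt_succ_iff.mp hp2) with hlt | heq
    · refine Or.inl ⟨hlt, hlt, ?_, ?_⟩
      · simp [List.get_eq_getElem, List.getElem_append_left hlt]
      · simp [List.get_eq_getElem, List.getElem_append_left (hl ▸ hlt)]
    · refine Or.inr ⟨heq, ?_, ?_⟩
      · simp [List.get_eq_getElem, List.getElem_append_right (le_of_eq heq.symm), heq]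
      · simp [List.get_eq_getElem, List.getElem_append_right (le_of_eq (hl ▸ heq).symm), hl ▸ heq]
  rcases key i with ⟨_, hi', ei, ei'⟩ | ⟨_, ei, ei'⟩ <;>
    rcases key j with ⟨_, hj', ej, ej'⟩ | ⟨_, ej, ej'⟩ <;>
      rw [ei, ej, ei', ej']
  · exact H ⟨i.1, hi'⟩ ⟨j.1, hj'⟩
  · exact ⟨(hx hl ⟨i.1, hi'⟩).1, (H ⟨i.1, hi'⟩ ⟨i.1, hi'⟩).2⟩
  · exact ⟨(hx hl ⟨j.1, hj'⟩).2, hc⟩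
  · exact ⟨by simp, hc⟩

theorem exists_point {L S : Type} [LinearOrder L] [LinearOrder S]
    {c : L → ℕ} {cS : S → ℕ} {k : ℕ} (hS : IsColorShuffle cS {i : ℕ | i < k})
    {xs : List L} {ys : List S} (h : SameQF c cS xs ys) (x : L) (hx : c x < k) :
    ∃ y : S, cS y = c x ∧ ∀ (hl : xs.length = ys.length) (i : Fin xs.length),
      (xs.get i ≤ x ↔ ys.get (Fin.cast hl i) ≤ y) ∧
      (x ≤ xs.get i ↔ y ≤ ys.get (Fin.cast hl i)) := by
  obtain ⟨hl, H⟩ := h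
  by_cases hex : ∃ i : Fin xs.length, xs.get i = x
  · obtain ⟨i0, hi0⟩ := hex
    refine ⟨ys.get (Fin.cast hl i0), by rw [← (H i0 i0).2, hi0], fun hl' i => ?_⟩
    have : hl' = hl := Subsingleton.elim _ _
    subst this
    constructor
    · rw [← hi0]; exact (H i i0).1
    · rw [← hi0]; exact (H i0 i).1
  · have htri : ∀ i : Fin xs.length, xs.get i < x ∨ x < xs.get i := fun i =>
      lt_or_gt_of_ne (fun e => hex ⟨i, e⟩)
    set Lo : Finset S := (Finset.univ.filter fun i : Fin xs.length => xs.get i < x).image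
      (fun i => ys.get (Fin.cast hl i)) with hLodef
    set Hi : Finset S := (Finset.univ.filter fun i : Fin xs.length => x < xs.get i).image
      (fun i => ys.get (Fin.cast hl i)) with hHidef
    have mono : ∀ s ∈ Lo, ∀ t ∈ Hi, s < t := by
      intro s hs t ht
      simp only [hLodef, hHidef, Finset.mem_image, Finset.mem_filter, Finset.mem_univ,
        true_and] at hs ht
      obtain ⟨i, hi, rfl⟩ := hs
      obtain ⟨j, hj, rfl⟩ := ht
      have : ¬ xs.get j ≤ xs.get i := not_le.mpr (hi.trans hj)
      have := (not_iff_not.mpr (H j i).1).mp this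
      exact not_le.mp this
    have main : ∃ y : S, cS y = c x ∧ (∀ s ∈ Lo, s < y) ∧ (∀ t ∈ Hi, y < t) := by
      rcases Lo.eq_empty_or_nonempty with hLo | hLo <;>
        rcases Hi.eq_empty_or_nonempty with hHi | hHi
      · obtain ⟨s0⟩ := hS.nonempty
        obtain ⟨s1, hs1⟩ := hS.no_min s0
        obtain ⟨q, _, _, hq⟩ := hS.dense_color s1 s0 hs1 (c x) hx
        exact ⟨q, hq, by simp [hLo], by simp [hHi]⟩
      · obtain ⟨a2, ha2⟩ := hS.no_min (Hi.min' hHi)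
        obtain ⟨q, _, hq2, hq⟩ := hS.dense_color a2 (Hi.min' hHi) ha2 (c x) hx
        exact ⟨q, hq, by simp [hLo], fun t ht => lt_of_lt_of_le hq2 (Hi.min'_le t ht)⟩
      · obtain ⟨b2, hb2⟩ := hS.no_max (Lo.max' hLo)
        obtain ⟨q, hq1, _, hq⟩ := hS.dense_color (Lo.max' hLo) b2 hb2 (c x) hx
        exact ⟨q, hq, fun s hs => lt_of_le_of_lt (Lo.le_max' s hs) hq1, by simp [hHi]⟩
      · have hba : Lo.max' hLo < Hi.min' hHi :=
          mono _ (Lo.max'_mem hLo) _ (Hi.min'_mem hHi)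
        obtain ⟨q, hq1, hq2, hq⟩ := hS.dense_color _ _ hba (c x) hx
        exact ⟨q, hq, fun s hs => lt_of_le_of_lt (Lo.le_max' s hs) hq1,
          fun t ht => lt_of_lt_of_le hq2 (Hi.min'_le t ht)⟩
    obtain ⟨y, hy, hyLo, hyHi⟩ := main
    refine ⟨y, hy, fun hl' i => ?_⟩
    have heq : hl' = hl := Subsingleton.elim _ _
    subst heq
    rcases htri i with hlt | hgt
    · have hmem : ys.get (Fin.cast hl' i) ∈ Lo := by
        simp only [hLodef, Finset.mem_image, Finset.mem_filter, Finset.mem_univ, true_and]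
        exact ⟨i, hlt, rfl⟩
      have h2 := hyLo _ hmem
      exact ⟨iff_of_true hlt.le h2.le, iff_of_false (not_le.mpr hlt) (not_le.mpr h2)⟩
    · have hmem : ys.get (Fin.cast hl' i) ∈ Hi := by
        simp only [hHidef, Finset.mem_image, Finset.mem_filter, Finset.mem_univ, true_and]
        exact ⟨i, hgt, rfl⟩
      have h2 := hyHi _ hmem
      exact ⟨iff_of_false (not_le.mpr hgt) (not_le.mpr h2), iff_of_true hgt.le h2.le⟩

theorem exists_realizing {L S : Type} [LinearOrder L] [LinearOrder S]
    (c : L → ℕ) (cS : S → ℕ) (k : ℕ)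
    (hall : ∀ (m : ℕ) (cs : Fin m → ℕ), (∀ i, cs i < k) →
      ∃ a : Fin m → L, StrictMono a ∧ ∀ i, c (a i) = cs i)
    (hcS : ∀ s : S, cS s < k)
    (ds : List S) : ∃ es : List L, SameQF cS c ds es := by
  rcases eq_or_ne ds [] with rfl | hne
  · exact ⟨[], rfl, fun i => i.elim0⟩
  · set T : Finset S := ds.toFinset with hT
    have hm0 : 0 < T.card := Finset.card_pos.mpr (by
      obtain ⟨x, hx⟩ := List.exists_mem_of_ne_nil ds hne
      exact ⟨x, List.mem_toFinset.mpr hx⟩)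
    set e : Fin T.card ≃o T := T.orderIsoOfFin rfl with he
    obtain ⟨a, ha, hac⟩ := hall T.card (fun i => cS (e i)) (fun i => hcS _)
    set g : S → L := fun s => if hsm : s ∈ T then a (e.symm ⟨s, hsm⟩) else a ⟨0, hm0⟩ with hg
    refine ⟨ds.map g, sameQF_map cS c ds g ?_ ?_⟩
    · intro u hu v hv
      have hu' : u ∈ T := List.mem_toFinset.mpr hu
      have hv' : v ∈ T := List.mem_toFinset.mpr hv
      have h1 : g u = a (e.symm ⟨u, hu'⟩) := by simp [hg, hu']
      have h2 : g v = a (e.symm ⟨v, hv'⟩) := by simp [hg, hv']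
      rw [h1, h2, ha.le_iff_le, e.symm.le_iff_le]
      rfl
    · intro u hu
      have hu' : u ∈ T := List.mem_toFinset.mpr hu
      have h1 : g u = a (e.symm ⟨u, hu'⟩) := by simp [hg, hu']
      rw [h1, hac, OrderIso.apply_symm_apply]

theorem extend_list {L S : Type} [LinearOrder L] [LinearOrder S]
    {c : L → ℕ} {cS : S → ℕ} {k : ℕ} (hS : IsColorShuffle cS {i : ℕ | i < k})
    (hcol : ∀ x : L, c x < k) :
    ∀ (t : List L) (xs : List L) (ys : List S), SameQF c cS xs ys →
      ∃ es : List S, SameQF c cS (xs ++ t) (ys ++ es) := by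
  intro t
  induction t with
  | nil => exact fun xs ys h => ⟨[], by simpa using h⟩
  | cons x t ih =>
    intro xs ys h
    obtain ⟨y, hy, hxy⟩ := exists_point hS h x (hcol x)
    have h' := sameQF_append_single h x y hxy hy.symm
    obtain ⟨es, hes⟩ := ih (xs ++ [x]) (ys ++ [y]) h'
    refine ⟨y :: es, ?_⟩
    simpa [List.append_assoc] using hes

/-- If every finite sequence of colors from {0,...,k-1} is realized by an
increasing tuple in the k-colored linear order L, then L ≤₂ Sh_c(k), the shuffle of all
k colors. -/
theorem all_sequences_realized_bf_two {L S : Type} [LinearOrder L] [LinearOrder S]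
    (c : L → ℕ) (cS : S → ℕ) (k : ℕ) (hcol : ∀ x : L, c x < k)
    (hall : ∀ (m : ℕ) (cs : Fin m → ℕ), (∀ i, cs i < k) →
      ∃ a : Fin m → L, StrictMono a ∧ ∀ i, c (a i) = cs i)
    (hS : IsColorShuffle cS {i : ℕ | i < k}) :
    BF c cS 2 ([] : List L) ([] : List S) := by
  rw [BF]
  refine ⟨fun h => absurd h (by norm_num), fun β hβ ds => ?_⟩
  have hcS : ∀ s : S, cS s < k := fun s => hS.colors_mem s
  obtain ⟨es, hA⟩ := exists_realizing c cS k hall hcS ds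
  refine ⟨es, ?_⟩
  have hβ' : β = 0 ∨ β = 1 := by
    have h2 : β < Order.succ 1 := by simpa using hβ
    rcases (Order.lt_succ_iff.mp h2).lt_or_eq with h1 | h1
    · exact Or.inl (Ordinal.lt_one_iff_zero.mp h1)
    · exact Or.inr h1
  rcases hβ' with rfl | rfl
  · rw [BF]
    exact ⟨fun _ => hA, fun γ hγ => absurd hγ (not_lt_of_ge (zero_le (a := γ)))⟩
  · rw [BF]
    refine ⟨fun h => absurd h (by norm_num), fun γ hγ ds2 => ?_⟩
    have hγ0 : γ = 0 := Ordinal.lt_one_iff_zero.mp hγ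
    subst hγ0
    obtain ⟨es2, hE⟩ := extend_list hS hcol ds2 es ds hA.symm'
    refine ⟨es2, ?_⟩
    rw [BF]
    exact ⟨fun _ => hE, fun δ hδ => absurd hδ (not_lt_of_ge (zero_le (a := δ)))⟩
end

section
/- Let ι be the natural embedding of P into the ordered sum L + 2 + P of linear orders, where L has no last element and no maximal successor chain of length 2, and P has no first element and no maximal successor chain of length 2. If tuples ā, b̄ from P satisfy ā ≡_α b̄ in P, then ι(ā) ≡_α ι(b̄) in L + 2 + P. -/
universe u

/-- Symmetric back-and-forth equivalence of tuples at level α (for plain linear orders,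
via the trivial coloring). -/
def BFEquiv {M N : Type} [LinearOrder M] [LinearOrder N]
    (cM : M → ℕ) (cN : N → ℕ) (α : Ordinal) (as : List M) (bs : List N) : Prop :=
  BF cM cN α as bs ∧ BF cN cM α bs as

/-- The natural embedding of P into the ordered sum L + 2 + P. -/
def iotaP {L P : Type} : P → L ⊕ₗ (Bool ⊕ₗ P) :=
  fun p => toLex (Sum.inr (toLex (Sum.inr p)))

theorem BF_iff {M N : Type u} [LinearOrder M] [LinearOrder N]
    (cM : M → ℕ) (cN : N → ℕ) (α : Ordinal.{0}) (as : List M) (bs : List N) :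
  BF cM cN α as bs ↔
  ((α = 0 → SameQF cM cN as bs) ∧
  (∀ β : Ordinal.{0}, β < α → ∀ ds : List N, ∃ es : List M,
    BF cN cM β (bs ++ ds) (as ++ es))) := by
  rw [BF]

example (p q : Bool ⊕ₗ P') [LinearOrder P'] : True := trivial
section Aux
variable {L P : Type} [LinearOrder L] [LinearOrder P]

/-- embed a non-P element into the sum -/
def embNI {L P : Type} : (L ⊕ Bool) → (L ⊕ₗ (Bool ⊕ₗ P))
  | .inl l => toLex (Sum.inl l)
  | .inr b => toLex (Sum.inr (toLex (Sum.inl b)))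

lemma embNI_lt_iota (c : L ⊕ Bool) (p : P) : embNI c < iotaP (L := L) p := by
  cases c with
  | inl l => exact Sum.Lex.inl_lt_inr l _
  | inr b =>
    show toLex (Sum.inr _) < toLex (Sum.inr _)
    rw [Sum.Lex.inr_lt_inr_iff]
    exact Sum.Lex.inl_lt_inr b p

lemma iota_le_iota_iff (p q : P) : iotaP (L := L) p ≤ iotaP q ↔ p ≤ q := by
  show toLex (Sum.inr _) ≤ toLex (Sum.inr _) ↔ _
  rw [Sum.Lex.inr_le_inr_iff, Sum.Lex.inr_le_inr_iff]

end Aux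
section Aux2
variable {L P : Type} [LinearOrder L] [LinearOrder P]

def mkS {L P : Type} : List (Option (L ⊕ Bool)) → List P → List (L ⊕ₗ (Bool ⊕ₗ P))
  | [], _ => []
  | some c :: t, ps => embNI c :: mkS t ps
  | none :: _, [] => []
  | none :: t, p :: ps => iotaP p :: mkS t ps

def tmplS {L P : Type} (xs : List (L ⊕ₗ (Bool ⊕ₗ P))) : List (Option (L ⊕ Bool)) :=
  xs.map fun x => match ofLex x with
    | .inl l => some (.inl l)
    | .inr y => match ofLex y with
      | .inl b => some (.inr b)
      | .inr _ => none

def extrS {L P : Type} (xs : List (L ⊕ₗ (Bool ⊕ₗ P))) : List P :=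
  xs.filterMap fun x => match ofLex x with
    | .inr y => match ofLex y with
      | .inr p => some p
      | _ => none
    | _ => none

def cntS {L : Type} (t : List (Option (L ⊕ Bool))) : ℕ := t.countP (fun o => o.isNone)

@[simp] lemma cntS_nil : cntS ([] : List (Option (L ⊕ Bool))) = 0 := rfl
@[simp] lemma cntS_cons_some (c : L ⊕ Bool) (t) : cntS (some c :: t) = cntS t := by
  simp [cntS, List.countP_cons]
@[simp] lemma cntS_cons_none (t : List (Option (L ⊕ Bool))) : cntS (none :: t) = cntS t + 1 := by
  simp [cntS, List.countP_cons]
@[simp] lemma cntS_append (t s : List (Option (L ⊕ Bool))) : cntS (t ++ s) = cntS t + cntS s := by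
  simp [cntS, List.countP_append]
@[simp] lemma cntS_replicate (k : ℕ) : cntS (List.replicate k (none : Option (L ⊕ Bool))) = k := by
  induction k with
  | zero => rfl
  | succ n ih => simp [List.replicate_succ, ih]

lemma mkS_length (t : List (Option (L ⊕ Bool))) (ps : List P) (h : cntS t = ps.length) :
    (mkS t ps).length = t.length := by
  induction t generalizing ps with
  | nil => simp [mkS]
  | cons o t ih =>
    cases o with
    | some c => simpa [mkS] using ih ps (by simpa using h)
    | none =>
      cases ps with
      | nil => simp at h
      | cons p ps => simpa [mkS] using ih ps (by simpa using h)

lemma mkS_append (t s : List (Option (L ⊕ Bool))) (ps qs : List P) (h : cntS t = ps.length) :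
    mkS (t ++ s) (ps ++ qs) = mkS t ps ++ mkS s qs := by
  induction t generalizing ps with
  | nil =>
    cases ps with
    | nil => simp [mkS]
    | cons p ps => simp at h
  | cons o t ih =>
    cases o with
    | some c => simp [mkS, ih ps (by simpa using h)]
    | none =>
      cases ps with
      | nil => simp at h
      | cons p ps => simp [mkS, ih ps (by simpa using h)]

lemma mkS_replicate (ps : List P) :
    mkS (List.replicate ps.length (none : Option (L ⊕ Bool))) ps = ps.map iotaP := by
  induction ps with
  | nil => rfl
  | cons p ps ih => simpa [List.replicate_succ, mkS] using ih

lemma sum_cases (x : L ⊕ₗ (Bool ⊕ₗ P)) : (∃ c, x = embNI c) ∨ (∃ p, x = iotaP (L := L) p) := by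
  rcases hx : ofLex x with l | y
  · refine Or.inl ⟨Sum.inl l, ?_⟩
    apply_fun toLex at hx; simp at hx; rw [embNI]; exact hx
  · rcases hy : ofLex y with b | p
    · refine Or.inl ⟨Sum.inr b, ?_⟩
      apply_fun toLex at hx; apply_fun toLex at hy
      simp at hx hy; rw [embNI, ← hy]; exact hx
    · refine Or.inr ⟨p, ?_⟩
      apply_fun toLex at hx; apply_fun toLex at hy
      simp at hx hy; rw [iotaP, ← hy]; exact hx

@[simp] lemma tmplS_nil : tmplS ([] : List (L ⊕ₗ (Bool ⊕ₗ P))) = [] := rfl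
@[simp] lemma extrS_nil : extrS ([] : List (L ⊕ₗ (Bool ⊕ₗ P))) = [] := rfl

@[simp] lemma tmplS_cons_iota (p : P) (xs : List (L ⊕ₗ (Bool ⊕ₗ P))) :
    tmplS (iotaP p :: xs) = none :: tmplS xs := rfl

@[simp] lemma extrS_cons_iota (p : P) (xs : List (L ⊕ₗ (Bool ⊕ₗ P))) :
    extrS (iotaP p :: xs) = p :: extrS xs := rfl

@[simp] lemma tmplS_cons_emb (c : L ⊕ Bool) (xs : List (L ⊕ₗ (Bool ⊕ₗ P))) :
    tmplS (embNI c :: xs) = some c :: tmplS xs := by cases c <;> rfl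

@[simp] lemma extrS_cons_emb (c : L ⊕ Bool) (xs : List (L ⊕ₗ (Bool ⊕ₗ P))) :
    extrS (embNI c :: xs) = extrS xs := by cases c <;> rfl

lemma tmplS_extrS_spec (xs : List (L ⊕ₗ (Bool ⊕ₗ P))) :
    mkS (tmplS xs) (extrS xs) = xs ∧ cntS (tmplS xs) = (extrS xs).length := by
  induction xs with
  | nil => exact ⟨rfl, rfl⟩
  | cons x xs ih =>
    rcases sum_cases x with ⟨c, rfl⟩ | ⟨p, rfl⟩
    · refine ⟨?_, by simpa using ih.2⟩
      rw [tmplS_cons_emb, extrS_cons_emb,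
        show mkS (some c :: tmplS xs) (extrS xs) = embNI c :: mkS (tmplS xs) (extrS xs) from rfl,
        ih.1]
    · refine ⟨?_, by simpa using ih.2⟩
      rw [tmplS_cons_iota, extrS_cons_iota,
        show mkS (none :: tmplS xs) (p :: extrS xs) = iotaP p :: mkS (tmplS xs) (extrS xs) from rfl,
        ih.1]

end Aux2
section Aux3
variable {L P : Type} [LinearOrder L] [LinearOrder P]

lemma cntS_take_lt (t : List (Option (L ⊕ Bool))) (i : ℕ) (h : t[i]? = some none) :
    cntS (t.take i) < cntS t := by
  induction t generalizing i with
  | nil => simp at h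
  | cons o t ih =>
    cases i with
    | zero =>
      simp at h; subst h; simp
    | succ i =>
      simp only [List.getElem?_cons_succ] at h
      have := ih i h
      cases o <;> simp [List.take_succ_cons] <;> omega

lemma mkS_getElem_emb (t : List (Option (L ⊕ Bool))) (ps : List P) (i : ℕ)
    (hi : i < (mkS t ps).length) (c : L ⊕ Bool) (h : t[i]? = some (some c)) :
    (mkS t ps)[i] = embNI c := by
  induction t generalizing ps i with
  | nil => simp [mkS] at hi
  | cons o t ih =>
    cases o with
    | some c' =>
      cases i with
      | zero => simp at h; subst h; rfl
      | succ i =>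
        simp only [List.getElem?_cons_succ] at h
        exact ih ps i (by simpa [mkS] using hi) h
    | none =>
      cases ps with
      | nil => simp [mkS] at hi
      | cons p ps =>
        cases i with
        | zero => simp at h
        | succ i =>
          simp only [List.getElem?_cons_succ] at h
          exact ih ps i (by simpa [mkS] using hi) h

end Aux3
section Aux4
variable {L P : Type} [LinearOrder L] [LinearOrder P]

lemma mkS_getElem_iota (t : List (Option (L ⊕ Bool))) (ps : List P) (i : ℕ)
    (hi : i < (mkS t ps).length) (h : t[i]? = some none)
    (hj : cntS (t.take i) < ps.length) :
    (mkS t ps)[i] = iotaP (ps[cntS (t.take i)]'hj) := by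
  induction t generalizing ps i with
  | nil => simp [mkS] at hi
  | cons o t ih =>
    cases o with
    | some c' =>
      cases i with
      | zero => simp at h
      | succ i =>
        simp only [List.getElem?_cons_succ] at h
        have h2 : cntS ((some c' :: t).take (i+1)) = cntS (t.take i) := by
          simp [List.take_succ_cons]
        have hj' : cntS (t.take i) < ps.length := by omega
        have := ih ps i (by simpa [mkS] using hi) h hj'
        show (mkS (some c' :: t) ps)[i+1]'hi = _
        rw [show (mkS (some c' :: t) ps)[i+1]'hi = (mkS t ps)[i]'(by simpa [mkS] using hi) from rfl, this]
        simp [List.take_succ_cons]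
    | none =>
      cases ps with
      | nil => simp [mkS] at hi
      | cons p ps =>
        cases i with
        | zero => rfl
        | succ i =>
          simp only [List.getElem?_cons_succ] at h
          have h2 : cntS ((none :: t).take (i+1)) = cntS (t.take i) + 1 := by
            simp [List.take_succ_cons]
          have hj' : cntS (t.take i) < ps.length := by
            simp [h2] at hj; omega
          have := ih ps i (by simpa [mkS] using hi) h hj'
          rw [show (mkS (none :: t) (p :: ps))[i+1]'hi = (mkS t ps)[i]'(by simpa [mkS] using hi) from rfl, this]
          simp [List.take_succ_cons]

end Aux4
section Aux5
variable {L P : Type} [LinearOrder L] [LinearOrder P]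

lemma sameQF_mkS (t : List (Option (L ⊕ Bool))) (ps qs : List P)
    (hc : cntS t = ps.length) (hc' : cntS t = qs.length)
    (h : SameQF (fun _ => (0:ℕ)) (fun _ => 0) ps qs) :
    SameQF (fun _ => (0:ℕ)) (fun _ => 0) (mkS t ps) (mkS t qs) := by
  obtain ⟨hl, hrel⟩ := h
  have l1 := mkS_length t ps hc
  have l2 := mkS_length t qs hc'
  refine ⟨by rw [l1, l2], ?_⟩
  intro i j
  refine ⟨?_, rfl⟩
  have hi : (i : ℕ) < t.length := by rw [← l1]; exact i.2
  have hj : (j : ℕ) < t.length := by rw [← l1]; exact j.2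
  have hti : t[(i:ℕ)]? = some (t[(i:ℕ)]'hi) := List.getElem?_eq_getElem hi
  have htj : t[(j:ℕ)]? = some (t[(j:ℕ)]'hj) := List.getElem?_eq_getElem hj
  have hip : ((Fin.cast (by rw [l1, l2] : (mkS t ps).length = (mkS t qs).length) i : Fin (mkS t qs).length) : ℕ) = (i : ℕ) := rfl
  simp only [List.get_eq_getElem, Fin.coe_cast]
  rcases hoi : t[(i:ℕ)]'hi with _ | ci <;> rcases hoj : t[(j:ℕ)]'hj with _ | cj
  · -- none, none
    rw [hoi] at hti; rw [hoj] at htj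
    have bi : cntS (t.take (i:ℕ)) < ps.length := hc ▸ cntS_take_lt t _ hti
    have bj : cntS (t.take (j:ℕ)) < ps.length := hc ▸ cntS_take_lt t _ htj
    have bi' : cntS (t.take (i:ℕ)) < qs.length := hc' ▸ cntS_take_lt t _ hti
    have bj' : cntS (t.take (j:ℕ)) < qs.length := hc' ▸ cntS_take_lt t _ htj
    rw [mkS_getElem_iota t ps _ (by omega) hti bi, mkS_getElem_iota t ps _ (by omega) htj bj,
        mkS_getElem_iota t qs _ (by omega) hti bi', mkS_getElem_iota t qs _ (by omega) htj bj',
        iota_le_iota_iff, iota_le_iota_iff]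
    have := (hrel ⟨cntS (t.take (i:ℕ)), bi⟩ ⟨cntS (t.take (j:ℕ)), bj⟩).1
    simpa [List.get_eq_getElem] using this
  · -- none, some
    rw [hoi] at hti; rw [hoj] at htj
    have bi : cntS (t.take (i:ℕ)) < ps.length := hc ▸ cntS_take_lt t _ hti
    have bi' : cntS (t.take (i:ℕ)) < qs.length := hc' ▸ cntS_take_lt t _ hti
    rw [mkS_getElem_iota t ps _ (by omega) hti bi, mkS_getElem_emb t ps _ (by omega) cj htj,
        mkS_getElem_iota t qs _ (by omega) hti bi', mkS_getElem_emb t qs _ (by omega) cj htj]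
    exact iff_of_false (not_le.mpr (embNI_lt_iota cj _)) (not_le.mpr (embNI_lt_iota cj _))
  · -- some, none
    rw [hoi] at hti; rw [hoj] at htj
    have bj : cntS (t.take (j:ℕ)) < ps.length := hc ▸ cntS_take_lt t _ htj
    have bj' : cntS (t.take (j:ℕ)) < qs.length := hc' ▸ cntS_take_lt t _ htj
    rw [mkS_getElem_emb t ps _ (by omega) ci hti, mkS_getElem_iota t ps _ (by omega) htj bj,
        mkS_getElem_emb t qs _ (by omega) ci hti, mkS_getElem_iota t qs _ (by omega) htj bj']
    exact iff_of_true (embNI_lt_iota ci _).le (embNI_lt_iota ci _).le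
  · -- some, some
    rw [hoi] at hti; rw [hoj] at htj
    rw [mkS_getElem_emb t ps _ (by omega) ci hti, mkS_getElem_emb t ps _ (by omega) cj htj,
        mkS_getElem_emb t qs _ (by omega) ci hti, mkS_getElem_emb t qs _ (by omega) cj htj]

end Aux5
section Main
variable {L P : Type} [LinearOrder L] [LinearOrder P]

lemma bf_length_le {M N : Type u} [LinearOrder M] [LinearOrder N]
    (cM : M → ℕ) (cN : N → ℕ) {β : Ordinal} (hβ : 0 < β) {as : List M} {bs : List N}
    (h : BF cM cN β as bs) : as.length ≤ bs.length := by
  obtain ⟨es, h0⟩ := ((BF_iff cM cN β as bs).mp h).2 0 hβ []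
  obtain ⟨hl, -⟩ := ((BF_iff _ _ _ _ _).mp h0).1 rfl
  simp at hl; omega

lemma inv_bf :
    ∀ (β : Ordinal) (t : List (Option (L ⊕ Bool))) (ps qs : List P) (k : ℕ),
    BF (fun _ => (0:ℕ)) (fun _ => 0) β ps qs → cntS t = ps.length →
    qs.length = ps.length + k →
    BF (fun _ => (0:ℕ)) (fun _ => 0) β (mkS t ps) (mkS (t ++ List.replicate k none) qs) := by
  intro β
  induction β using Ordinal.induction with
  | h β IH =>
    intro t ps qs k h hc hk
    rw [BF_iff]
    constructor
    · rintro rfl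
      have hqf := ((BF_iff _ _ _ _ _).mp h).1 rfl
      obtain ⟨hl, hr⟩ := hqf
      have hk0 : k = 0 := by omega
      subst hk0
      simpa using sameQF_mkS t ps qs hc (by omega) ⟨hl, hr⟩
    · intro β' hβ' ds
      obtain ⟨esP, hP2⟩ := ((BF_iff _ _ _ _ _).mp h).2 β' hβ' (extrS ds)
      have hlen : (qs ++ extrS ds).length ≤ (ps ++ esP).length := by
        rcases eq_or_lt_of_le (zero_le (a := β')) with h0 | h0
        · obtain ⟨hl, -⟩ := ((BF_iff _ _ _ _ _).mp hP2).1 h0.symm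
          omega
        · exact bf_length_le _ _ h0 hP2
      have hds := tmplS_extrS_spec ds
      set m := (ps ++ esP).length - (qs ++ extrS ds).length with hm
      refine ⟨mkS (List.replicate k none ++ tmplS ds ++ List.replicate m none) esP, ?_⟩
      have e1 : mkS (t ++ List.replicate k none) qs ++ ds
          = mkS ((t ++ List.replicate k none) ++ tmplS ds) (qs ++ extrS ds) := by
        rw [mkS_append _ _ _ _ (by simp [hc]; omega), hds.1]
      have e2 : mkS t ps ++ mkS (List.replicate k none ++ tmplS ds ++ List.replicate m none) esP
          = mkS (t ++ (List.replicate k none ++ tmplS ds ++ List.replicate m none)) (ps ++ esP) := by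
        rw [mkS_append _ _ _ _ hc]
      rw [e1, e2]
      have key := IH β' hβ' ((t ++ List.replicate k none) ++ tmplS ds) (qs ++ extrS ds)
        (ps ++ esP) m hP2
        (by simp [hds.2, hc]; omega)
        (by simp only [hm, List.length_append] at hlen ⊢; omega)
      have eassoc : ((t ++ List.replicate k none) ++ tmplS ds) ++ List.replicate m none
          = t ++ (List.replicate k none ++ tmplS ds ++ List.replicate m none) := by
        simp [List.append_assoc]
      rw [eassoc] at key
      exact key

end Main
/-- With L having no last element and no maximal successor chain of
length 2, and P having no first element and no maximal successor chain of length 2,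
if ā ≡_α b̄ in P then ι(ā) ≡_α ι(b̄) in L + 2 + P. -/
theorem bf_equiv_embed {L P : Type} [LinearOrder L] [LinearOrder P]
    [NoMaxOrder L] [NoMinOrder P]
    (hL : ∀ x y : L, ¬ (x ⋖ y ∧ (∀ z : L, ¬ z ⋖ x) ∧ (∀ z : L, ¬ y ⋖ z)))
    (hP : ∀ x y : P, ¬ (x ⋖ y ∧ (∀ z : P, ¬ z ⋖ x) ∧ (∀ z : P, ¬ y ⋖ z)))
    (α : Ordinal) (as bs : List P)
    (h : BFEquiv (fun _ => 0) (fun _ => 0) α as bs) :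
    BFEquiv (fun _ => 0) (fun _ => 0) α
      (as.map (iotaP (L := L))) (bs.map (iotaP (L := L))) := by
  obtain ⟨h1, h2⟩ := h
  have hlen : as.length = bs.length := by
    rcases eq_or_lt_of_le (zero_le (a := α)) with h0 | h0
    · obtain ⟨hl, -⟩ := ((BF_iff _ _ _ _ _).mp h1).1 h0.symm; exact hl
    · exact le_antisymm (bf_length_le _ _ h0 h1) (bf_length_le _ _ h0 h2)
  have e0 : List.replicate as.length (none : Option (L ⊕ Bool)) ++ List.replicate 0 none
      = List.replicate as.length none := by simp
  have e0' : List.replicate bs.length (none : Option (L ⊕ Bool)) ++ List.replicate 0 none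
      = List.replicate bs.length none := by simp
  constructor
  · have key := inv_bf α (List.replicate as.length (none : Option (L ⊕ Bool))) as bs 0 h1
      (by simp) (by omega)
    rw [e0, mkS_replicate, show List.replicate as.length (none : Option (L ⊕ Bool))
      = List.replicate bs.length none from by rw [hlen], mkS_replicate] at key
    exact key
  · have key := inv_bf α (List.replicate bs.length (none : Option (L ⊕ Bool))) bs as 0 h2
      (by simp) (by omega)
    rw [e0', mkS_replicate, show List.replicate bs.length (none : Option (L ⊕ Bool))
      = List.replicate as.length none from by rw [hlen], mkS_replicate] at key
    exact key
end

section
/- Let ι be the natural embedding of P into L + 2 + P, where L has no last element and no maximal successor chain of length 2, and P has no first element and no maximal successor chain of length 2. If ι(ā) ≡_{α+2} ι(b̄) in L + 2 + P, then ā ≡_α b̄ in P. -/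
universe u

/- ================= Auxiliary development ================= -/

section Aux

theorem BF_def {M : Type u} {N : Type u} [LinearOrder M] [LinearOrder N]
    (cM : M → ℕ) (cN : N → ℕ) (α : Ordinal.{0}) (as : List M) (bs : List N) :
    BF cM cN α as bs ↔ ((α = 0 → SameQF cM cN as bs) ∧
      (∀ β : Ordinal.{0}, β < α → ∀ ds : List N, ∃ es : List M,
        BF cN cM β (bs ++ ds) (as ++ es))) := by
  rw [BF]

variable {M : Type u} {N : Type u} [LinearOrder M] [LinearOrder N]
  {cM : M → ℕ} {cN : N → ℕ}

theorem BF.qf {as : List M} {bs : List N} (h : BF cM cN 0 as bs) : SameQF cM cN as bs :=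
  ((BF_def _ _ _ _ _).mp h).1 rfl

theorem BF.move {α β : Ordinal} {as : List M} {bs : List N} (h : BF cM cN α as bs)
    (hβ : β < α) (ds : List N) : ∃ es : List M, BF cN cM β (bs ++ ds) (as ++ es) :=
  ((BF_def _ _ _ _ _).mp h).2 β hβ ds

theorem BF.mk {α : Ordinal} {as : List M} {bs : List N}
    (h1 : α = 0 → SameQF cM cN as bs)
    (h2 : ∀ β : Ordinal, β < α → ∀ ds : List N, ∃ es : List M,
      BF cN cM β (bs ++ ds) (as ++ es)) : BF cM cN α as bs :=
  (BF_def _ _ _ _ _).mpr ⟨h1, h2⟩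

theorem SameQF.len {as : List M} {bs : List N} (h : SameQF cM cN as bs) :
    as.length = bs.length := h.1

theorem SameQF.le_iff' {as : List M} {bs : List N} (h : SameQF cM cN as bs)
    {i j : ℕ} (hi : i < as.length) (hj : j < as.length) :
    (as[i] ≤ as[j] ↔ bs[i]'(h.1 ▸ hi) ≤ bs[j]'(h.1 ▸ hj)) := by
  have h2 := (h.2 ⟨i, hi⟩ ⟨j, hj⟩).1
  simpa [List.get_eq_getElem] using h2

theorem SameQF.lt_iff' {as : List M} {bs : List N} (h : SameQF cM cN as bs)
    {i j : ℕ} (hi : i < as.length) (hj : j < as.length) :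
    (as[i] < as[j] ↔ bs[i]'(h.1 ▸ hi) < bs[j]'(h.1 ▸ hj)) := by
  rw [lt_iff_le_not_ge, lt_iff_le_not_ge, h.le_iff' hi hj, h.le_iff' hj hi]

/-- one-step alignment: the second list padded-matches the first -/
theorem bf_align {α : Ordinal} {as : List M} {bs : List N} (h : BF cM cN α as bs)
    (hα : 0 < α) : ∃ u : List M, SameQF cN cM bs (as ++ u) := by
  obtain ⟨es, h0⟩ := h.move hα []
  rw [List.append_nil] at h0
  exact ⟨es, h0.qf⟩

theorem bf_len_le {α : Ordinal} {as : List M} {bs : List N} (h : BF cM cN α as bs)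
    (hα : 0 < α) : as.length ≤ bs.length := by
  obtain ⟨u, hu⟩ := bf_align h hα
  have := hu.len
  simp only [List.length_append] at this
  omega

/- ordinal helpers -/
theorem ord_lt_add_one (α : Ordinal) : α < α + 1 := by
  rw [Ordinal.add_one_eq_succ]; exact Order.lt_succ α

theorem ord_pos_add_one (α : Ordinal) : (0 : Ordinal) < α + 1 :=
  lt_of_le_of_lt zero_le (ord_lt_add_one α)

theorem ord_add_one_lt {β α : Ordinal} (h : β < α) : β + 1 < α + 1 := by
  rw [Ordinal.add_one_eq_succ, Ordinal.add_one_eq_succ]; exact Order.succ_lt_succ h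

theorem ord_two_eq (α : Ordinal) : α + 2 = (α + 1) + 1 := by
  rw [add_assoc, one_add_one_eq_two]

theorem ord_add_one_lt_add_two (α : Ordinal) : α + 1 < α + 2 := by
  rw [ord_two_eq]; exact ord_lt_add_one _

theorem ord_pos_add_two (α : Ordinal) : (0 : Ordinal) < α + 2 :=
  lt_trans (ord_pos_add_one α) (ord_add_one_lt_add_two α)

theorem ord_one_lt_add_one {α : Ordinal} (h : 1 ≤ α) : (1 : Ordinal) < α + 1 :=
  lt_of_le_of_lt h (ord_lt_add_one α)

end Aux

section Sum

variable {L P : Type} [LinearOrder L] [LinearOrder P]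

/-- the two middle elements -/
def bEl {L P : Type} (b : Bool) : L ⊕ₗ (Bool ⊕ₗ P) := toLex (Sum.inr (toLex (Sum.inl b)))

theorem iota_le_iota {p q : P} : iotaP (L := L) p ≤ iotaP q ↔ p ≤ q := by
  simp [iotaP, Sum.Lex.inr_le_inr_iff]

theorem iota_lt_iota {p q : P} : iotaP (L := L) p < iotaP q ↔ p < q := by
  simp [iotaP, Sum.Lex.inr_lt_inr_iff]

theorem inlS_lt_inlS {x y : L} :
    (toLex (Sum.inl x) : L ⊕ₗ (Bool ⊕ₗ P)) < toLex (Sum.inl y) ↔ x < y := by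
  simp [Sum.Lex.inl_lt_inl_iff]

theorem inlS_lt_bEl (x : L) (b : Bool) :
    (toLex (Sum.inl x) : L ⊕ₗ (Bool ⊕ₗ P)) < bEl b :=
  Sum.Lex.inl_lt_inr _ _

theorem inlS_lt_iota (x : L) (p : P) :
    (toLex (Sum.inl x) : L ⊕ₗ (Bool ⊕ₗ P)) < iotaP p :=
  Sum.Lex.inl_lt_inr _ _

theorem bEl_lt_iota (b : Bool) (p : P) : bEl (L := L) b < iotaP p := by
  exact Sum.Lex.inr_lt_inr_iff.mpr (Sum.Lex.inl_lt_inr _ _)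

theorem b0_lt_b1 : bEl (L := L) (P := P) false < bEl true := by
  exact Sum.Lex.inr_lt_inr_iff.mpr (Sum.Lex.inl_lt_inl_iff.mpr (by decide))

theorem S_cases (s : L ⊕ₗ (Bool ⊕ₗ P)) :
    (∃ l, s = toLex (Sum.inl l)) ∨ s = bEl false ∨ s = bEl true ∨ ∃ p, s = iotaP p := by
  rcases s with l | b | p
  · exact Or.inl ⟨l, rfl⟩
  · cases b
    · exact Or.inr (Or.inl rfl)
    · exact Or.inr (Or.inr (Or.inl rfl))
  · exact Or.inr (Or.inr (Or.inr ⟨p, rfl⟩))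

theorem lt_b0_iff {s : L ⊕ₗ (Bool ⊕ₗ P)} : s < bEl false ↔ ∃ l, s = toLex (Sum.inl l) := by
  constructor
  · intro h
    rcases S_cases s with ⟨l, rfl⟩ | rfl | rfl | ⟨p, rfl⟩
    · exact ⟨l, rfl⟩
    · exact absurd h (lt_irrefl _)
    · exact absurd (lt_trans b0_lt_b1 h) (lt_irrefl _)
    · exact absurd (lt_trans (bEl_lt_iota false p) h) (lt_irrefl _)
  · rintro ⟨l, rfl⟩; exact inlS_lt_bEl l false

theorem b1_lt_iff {s : L ⊕ₗ (Bool ⊕ₗ P)} : bEl true < s ↔ ∃ p, s = iotaP p := by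
  constructor
  · intro h
    rcases S_cases s with ⟨l, rfl⟩ | rfl | rfl | ⟨p, rfl⟩
    · exact absurd (lt_trans (inlS_lt_bEl l true) h) (lt_irrefl _)
    · exact absurd (lt_trans b0_lt_b1 h) (lt_irrefl _)
    · exact absurd h (lt_irrefl _)
    · exact ⟨p, rfl⟩
  · rintro ⟨p, rfl⟩; exact bEl_lt_iota true p

theorem lt_inlS_iff {s : L ⊕ₗ (Bool ⊕ₗ P)} {y : L} (h : s < toLex (Sum.inl y)) :
    ∃ x : L, s = toLex (Sum.inl x) := by
  rcases S_cases s with ⟨l, rfl⟩ | rfl | rfl | ⟨p, rfl⟩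
  · exact ⟨l, rfl⟩
  · exact absurd (lt_trans (inlS_lt_bEl y false) h) (lt_irrefl _)
  · exact absurd (lt_trans (inlS_lt_bEl y true) h) (lt_irrefl _)
  · exact absurd (lt_trans (inlS_lt_iota y p) h) (lt_irrefl _)

theorem no_middle_b {s : L ⊕ₗ (Bool ⊕ₗ P)} (h1 : bEl false < s) (h2 : s < bEl true) :
    False := by
  rcases S_cases s with ⟨l, rfl⟩ | rfl | rfl | ⟨p, rfl⟩
  · exact absurd (lt_trans (inlS_lt_bEl l false) h1) (lt_irrefl _)
  · exact absurd h1 (lt_irrefl _)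
  · exact absurd h2 (lt_irrefl _)
  · exact absurd (lt_trans (bEl_lt_iota true p) h2) (lt_irrefl _)

end Sum

section Claim

variable {L P : Type} [LinearOrder L] [LinearOrder P]

theorem getElem_idx_congr {α : Type*} {l : List α} {i j : ℕ} (h : i = j) (hi : i < l.length) :
    l[i] = l[j]'(h ▸ hi) := by subst h; rfl

theorem not_iota_le_b1 (p : P) : ¬ (iotaP (L := L) p ≤ bEl true) :=
  not_le.mpr (bEl_lt_iota true p)

theorem claimA (pbar : P) :
    ∀ (γ : Ordinal) (u v : List P) (X Y : List (L ⊕ₗ (Bool ⊕ₗ P))) (f : ℕ → ℕ) (j : ℕ)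
    (_hBF : BF (fun _ => (0:ℕ)) (fun _ => (0:ℕ)) (γ + 1) X Y)
    (_hXY : X.length ≤ Y.length)
    (hlen : u.length = v.length)
    (_hpin : ∃ (h1 : j < X.length) (h2 : j < Y.length), X[j] = bEl true ∧ Y[j] = bEl true)
    (_hf : ∀ i (hi : i < u.length), ∃ (hX : f i < X.length) (hY : f i < Y.length),
      X[f i] = iotaP u[i] ∧ Y[f i] = iotaP (v[i]'(by omega))),
    BF (fun _ => (0:ℕ)) (fun _ => (0:ℕ)) γ u v := by
  intro γ
  induction γ using Ordinal.induction with
  | h γ IH =>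
  intro u v X Y f j hBF hXY hlen hpin hf
  obtain ⟨hjX, hjY, hXj, hYj⟩ := hpin
  refine BF.mk ?_ ?_
  · -- quantifier-free part
    intro _
    obtain ⟨w, hw⟩ := bf_align hBF (ord_pos_add_one γ)
    refine ⟨hlen, ?_⟩
    intro i k
    refine ⟨?_, rfl⟩
    simp only [List.get_eq_getElem, Fin.coe_cast]
    obtain ⟨hXi, hYi, hXfi, hYfi⟩ := hf i.1 i.2
    obtain ⟨hXk, hYk, hXfk, hYfk⟩ := hf k.1 k.2
    have h1 := hw.le_iff' hYi hYk
    rw [List.getElem_append_left hXi, List.getElem_append_left hXk] at h1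
    rw [hXfi, hXfk, hYfi, hYfk, iota_le_iota, iota_le_iota] at h1
    exact h1.symm
  · -- back-and-forth part
    intro β hβ ds
    set r := Y.length - X.length with hr
    obtain ⟨ds', hds'len, hds'get⟩ :
        ∃ ds' : List P, ds'.length = ds.length + r ∧
          ∀ k (hk : k < ds.length), ∃ hk' : k < ds'.length, ds'[k] = ds[k] :=
      ⟨ds ++ List.replicate r pbar, by simp,
        fun k hk => ⟨by simp; omega, List.getElem_append_left hk⟩⟩
    obtain ⟨es', hes'⟩ := hBF.move (ord_add_one_lt hβ) (ds'.map iotaP)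
    have hYX : Y.length = X.length + r := by omega
    have hlen2 : Y.length + ds'.length ≤ X.length + es'.length := by
      have := bf_len_le hes' (ord_pos_add_one β)
      simp only [List.length_append, List.length_map] at this
      omega
    obtain ⟨w, hw⟩ := bf_align hes' (ord_pos_add_one β)
    -- hw : SameQF _ _ (X ++ es') ((Y ++ ds'.map iotaP) ++ w)
    have hwlen := hw.len
    simp only [List.length_append, List.length_map] at hwlen
    have key : ∀ k, k < ds'.length → ∃ e : P, ∃ (hk : r + k < es'.length), es'[r+k] = iotaP e := by
      intro k hk
      have hk1 : r + k < es'.length := by omega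
      have hp : X.length + (r + k) < (X ++ es').length := by
        simp only [List.length_append]; omega
      have hp2 : X.length + (r+k) < (Y ++ ds'.map iotaP).length := by
        simp only [List.length_append, List.length_map]; omega
      have hj1 : j < (X ++ es').length := by simp only [List.length_append]; omega
      have e1 : (X ++ es')[X.length + (r+k)]'hp = es'[r+k]'hk1 := by
        rw [List.getElem_append_right (by omega : X.length ≤ X.length + (r+k))]
        exact getElem_idx_congr (by omega) _
      have e2 : ((Y ++ ds'.map iotaP) ++ w)[X.length + (r+k)]'(hw.1 ▸ hp) =
          iotaP (ds'[k]'hk) := by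
        rw [List.getElem_append_left hp2,
          List.getElem_append_right (show Y.length ≤ X.length + (r+k) by omega)]
        rw [getElem_idx_congr (show X.length + (r+k) - Y.length = k by omega)]
        rw [List.getElem_map]
      have e3 : (X ++ es')[j]'hj1 = bEl true := by
        rw [List.getElem_append_left hjX]; exact hXj
      have e4 : ((Y ++ ds'.map iotaP) ++ w)[j]'(hw.1 ▸ hj1) = bEl true := by
        rw [List.getElem_append_left (show j < (Y ++ ds'.map iotaP).length by
          simp only [List.length_append]; omega),
          List.getElem_append_left hjY]
        exact hYj
      have h1 := hw.le_iff' hp hj1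
      rw [e1, e3] at h1
      rw [e2, e4] at h1
      have h2 : ¬ (es'[r+k]'hk1 ≤ bEl true) := by
        rw [h1]; exact not_iota_le_b1 _
      obtain ⟨e, he⟩ := b1_lt_iff.mp (not_le.mp h2)
      exact ⟨e, hk1, he⟩
    choose g hg using key
    obtain ⟨es, hES, hesget⟩ :
        ∃ es : List P, es.length = ds.length ∧
          ∀ k (hk : k < ds.length), ∃ hk' : k < es.length,
            es[k] = g k (by omega) :=
      ⟨List.ofFn (fun k : Fin ds.length => g k.1 (by omega)), by simp,
        fun k hk => ⟨by simpa using hk, by simp⟩⟩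
    refine ⟨es, ?_⟩
    refine IH β hβ (v ++ ds) (u ++ es) (Y ++ ds'.map iotaP) (X ++ es')
      (fun i => if i < v.length then f i else Y.length + (i - v.length)) j hes' ?_ ?_ ?_ ?_
    · simp only [List.length_append, List.length_map]; omega
    · simp only [List.length_append, hES]; omega
    · have h1 : j < (Y ++ ds'.map iotaP).length := by
        simp only [List.length_append]; omega
      have h2 : j < (X ++ es').length := by
        simp only [List.length_append]; omega
      refine ⟨h1, h2, ?_, ?_⟩
      · rw [List.getElem_append_left hjY]; exact hYj
      · rw [List.getElem_append_left hjX]; exact hXj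
    · intro i hi
      simp only [List.length_append, hES] at hi
      by_cases hi' : i < v.length
      · have hiu : i < u.length := by omega
        obtain ⟨hXi, hYi, hXfi, hYfi⟩ := hf i hiu
        simp only [if_pos hi']
        have h1 : f i < (Y ++ ds'.map iotaP).length := by
          simp only [List.length_append]; omega
        have h2 : f i < (X ++ es').length := by
          simp only [List.length_append]; omega
        refine ⟨h1, h2, ?_, ?_⟩
        · rw [List.getElem_append_left hYi, List.getElem_append_left hi']
          exact hYfi
        · rw [List.getElem_append_left hXi, List.getElem_append_left hiu]
          exact hXfi
      · have hk2 : i - v.length < ds.length := by omega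
        have hk2' : i - v.length < ds'.length := by omega
        simp only [if_neg hi']
        set k := i - v.length with hkdef
        have h1 : Y.length + k < (Y ++ ds'.map iotaP).length := by
          simp only [List.length_append, List.length_map]; omega
        have h2 : Y.length + k < (X ++ es').length := by
          simp only [List.length_append]; omega
        refine ⟨h1, h2, ?_, ?_⟩
        · -- (Y ++ ds'.map iotaP)[Y.length + k] = iotaP ((v ++ ds)[i])
          rw [List.getElem_append_right (show Y.length ≤ Y.length + k by omega)]
          rw [getElem_idx_congr (show Y.length + k - Y.length = k by omega)]
          rw [List.getElem_map]
          rw [List.getElem_append_right (show v.length ≤ i from not_lt.mp hi')]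
          congr 1
          obtain ⟨hk', hdk⟩ := hds'get k hk2
          rw [hdk]
        · -- (X ++ es')[Y.length + k] = iotaP ((u ++ es)[i])
          rw [List.getElem_append_right (show X.length ≤ Y.length + k by omega)]
          rw [getElem_idx_congr (show Y.length + k - X.length = r + k by omega)]
          obtain ⟨hkk, hgk⟩ := hg k hk2'
          rw [hgk]
          rw [List.getElem_append_right (show u.length ≤ i by omega)]
          obtain ⟨hk', hek⟩ := hesget k hk2
          rw [getElem_idx_congr (show i - u.length = k by omega), hek]

end Claim

section Pin

variable {L P : Type} [LinearOrder L] [LinearOrder P]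

theorem getElem_append_right'' {α : Type*} {l1 l2 : List α} {i k : ℕ} (hi : l1.length ≤ i)
    (hk : i - l1.length = k) (h2 : k < l2.length) :
    ∀ (hh : i < (l1 ++ l2).length), (l1 ++ l2)[i]'hh = l2[k] := fun _ => by
  rw [List.getElem_append_right hi]; exact getElem_idx_congr hk _

theorem pin [NoMaxOrder L] [NoMinOrder P]
    (hL : ∀ x y : L, ¬ (x ⋖ y ∧ (∀ z : L, ¬ z ⋖ x) ∧ (∀ z : L, ¬ y ⋖ z)))
    (hP : ∀ x y : P, ¬ (x ⋖ y ∧ (∀ z : P, ¬ z ⋖ x) ∧ (∀ z : P, ¬ y ⋖ z)))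
    (α : Ordinal) (hα : 1 ≤ α) (as bs : List P)
    (hlen : bs.length = as.length)
    (h : BF (fun _ => (0:ℕ)) (fun _ => (0:ℕ)) (α+2) (bs.map (iotaP (L := L))) (as.map (iotaP (L := L)))) :
    ∃ es₀ : List (L ⊕ₗ (Bool ⊕ₗ P)),
      BF (fun _ => (0:ℕ)) (fun _ => (0:ℕ)) (α+1)
        (as.map (iotaP (L := L)) ++ [bEl false, bEl true]) (bs.map (iotaP (L := L)) ++ es₀)
      ∧ ∃ _h2 : 2 ≤ es₀.length, es₀[1] = bEl true := by
  obtain ⟨es₀, h1⟩ := h.move (ord_add_one_lt_add_two α) [bEl false, bEl true]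
  -- h1 : BF (α+1) (as.map iotaP ++ [bEl false, bEl true]) (bs.map iotaP ++ es₀)
  have hm2 : 2 ≤ es₀.length := by
    have := bf_len_le h1 (ord_pos_add_one α)
    simp only [List.length_append, List.length_map, List.length_cons, List.length_nil,
      hlen] at this
    omega
  set n := as.length with hn
  set m := es₀.length with hm
  -- length facts
  have hXlen : (as.map (iotaP (L := L)) ++ [bEl false, bEl true]).length = n + 2 := by
    simp [hn]
  have hYlen : (bs.map (iotaP (L := L)) ++ es₀).length = n + m := by
    simp [hlen, hm]
  -- evaluation helpers
  have evX : ∀ i (hi : i < n), ∀ hh, (as.map (iotaP (L := L)) ++ [bEl false, bEl true])[i]'hh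
      = iotaP (as[i]'(by omega)) := by
    intro i hi hh
    rw [List.getElem_append_left (by simp only [List.length_map]; omega), List.getElem_map]
  have evX0 : ∀ hh, (as.map (iotaP (L := L)) ++ [bEl false, bEl true])[n]'hh = bEl false := by
    intro hh
    rw [getElem_append_right'' (k := 0) (by simp only [List.length_map]; omega)
      (by simp only [List.length_map]; omega) (by simp)]
    rfl
  have evX1 : ∀ hh, (as.map (iotaP (L := L)) ++ [bEl false, bEl true])[n+1]'hh = bEl true := by
    intro hh
    rw [getElem_append_right'' (k := 1) (by simp only [List.length_map]; omega)
      (by simp only [List.length_map]; omega) (by simp)]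
    rfl
  have evY : ∀ i (hi : i < n), ∀ hh, (bs.map (iotaP (L := L)) ++ es₀)[i]'hh = iotaP (bs[i]'(by omega)) := by
    intro i hi hh
    rw [List.getElem_append_left (by simp only [List.length_map]; omega), List.getElem_map]
  have evYk : ∀ k (hk : k < m) hh, (bs.map (iotaP (L := L)) ++ es₀)[n+k]'hh = es₀[k]'(by omega) := by
    intro k hk hh
    rw [getElem_append_right'' (k := k) (by simp only [List.length_map]; omega)
      (by simp only [List.length_map]; omega) (by omega)]
  -- the two response elements
  have h0m : 0 < m := by omega
  have h1m : 1 < m := by omega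
  -- first alignment: e0 < e1
  obtain ⟨w, hw⟩ := bf_align h1 (ord_pos_add_one α)
  have hwlen := hw.len
  have he01 : es₀[0] < es₀[1] := by
    have hi : n + 0 < (bs.map (iotaP (L := L)) ++ es₀).length := by omega
    have hj : n + 1 < (bs.map (iotaP (L := L)) ++ es₀).length := by omega
    have evXw0 : ∀ hh, ((as.map (iotaP (L := L)) ++ [bEl false, bEl true]) ++ w)[n+0]'hh
        = bEl false := by
      intro hh
      rw [List.getElem_append_left (by rw [hXlen]; omega)]
      rw [getElem_idx_congr (show n + 0 = n by omega)]
      exact evX0 _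
    have evXw1 : ∀ hh, ((as.map (iotaP (L := L)) ++ [bEl false, bEl true]) ++ w)[n+1]'hh
        = bEl true := by
      intro hh
      rw [List.getElem_append_left (by rw [hXlen]; omega)]
      exact evX1 _
    have hcmp := hw.lt_iff' hi hj
    simp only [evYk 0 h0m, evYk 1 h1m, evXw0, evXw1] at hcmp
    exact hcmp.mpr b0_lt_b1
  -- no middle element between e0 and e1
  have hmid : ∀ s, es₀[0] < s → s < es₀[1] → False := by
    intro s hs1 hs2
    obtain ⟨es₂, h2⟩ := h1.move (ord_pos_add_one α) [s]
    have hq := h2.qf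
    have hql := hq.len
    simp only [List.length_append, List.length_map, List.length_cons, List.length_nil,
      hlen] at hql
    -- hql : n + m + 1 = n + 2 + es₂.length
    have hi : n + m < ((bs.map (iotaP (L := L)) ++ es₀) ++ [s]).length := by
      simp only [List.length_append, List.length_map, List.length_cons, List.length_nil]; omega
    have hj : n + 0 < ((bs.map (iotaP (L := L)) ++ es₀) ++ [s]).length := by
      simp only [List.length_append, List.length_map, List.length_cons, List.length_nil]; omega
    have hj1 : n + 1 < ((bs.map (iotaP (L := L)) ++ es₀) ++ [s]).length := by
      simp only [List.length_append, List.length_map, List.length_cons, List.length_nil]; omega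
    have ev_s : ∀ hh, ((bs.map (iotaP (L := L)) ++ es₀) ++ [s])[n+m]'hh = s := by
      intro hh
      rw [getElem_append_right'' (k := 0)
        (by simp only [List.length_append, List.length_map]; omega)
        (by simp only [List.length_append, List.length_map]; omega) (by simp)]
      rfl
    have ev_e0 : ∀ hh, ((bs.map (iotaP (L := L)) ++ es₀) ++ [s])[n+0]'hh = es₀[0] := by
      intro hh
      rw [List.getElem_append_left (by rw [hYlen]; omega)]; exact evYk 0 h0m _
    have ev_e1 : ∀ hh, ((bs.map (iotaP (L := L)) ++ es₀) ++ [s])[n+1]'hh = es₀[1] := by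
      intro hh
      rw [List.getElem_append_left (by rw [hYlen]; omega)]; exact evYk 1 h1m _
    have ev2_s : ∀ hh, ((as.map (iotaP (L := L)) ++ [bEl false, bEl true]) ++ es₂)[n+m]'hh
        = es₂[m-2]'(by omega) := by
      intro hh
      rw [getElem_append_right'' (k := m - 2) (by rw [hXlen]; omega) (by rw [hXlen]; omega)
        (by omega)]
    have ev2_b0 : ∀ hh, ((as.map (iotaP (L := L)) ++ [bEl false, bEl true]) ++ es₂)[n+0]'hh
        = bEl false := by
      intro hh
      rw [List.getElem_append_left (by rw [hXlen]; omega)]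
      rw [getElem_idx_congr (show n + 0 = n by omega)]
      exact evX0 _
    have ev2_b1 : ∀ hh, ((as.map (iotaP (L := L)) ++ [bEl false, bEl true]) ++ es₂)[n+1]'hh
        = bEl true := by
      intro hh
      rw [List.getElem_append_left (by rw [hXlen]; omega)]
      exact evX1 _
    have c1 := hq.lt_iff' hj hi
    simp only [ev_s, ev_e0, ev2_s, ev2_b0] at c1
    have c2 := hq.lt_iff' hi hj1
    simp only [ev_s, ev_e1, ev2_s, ev2_b1] at c2
    exact no_middle_b (c1.mp hs1) (c2.mp hs2)
  -- refutation below e0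
  have refBelow : ∀ zS : L ⊕ₗ (Bool ⊕ₗ P), zS < es₀[0] →
      (∀ s, zS < s → s < es₀[0] → False) → False := by
    intro zS hz hcov
    obtain ⟨w₃, h2⟩ := h1.move (ord_one_lt_add_one hα) [zS]
    have hlen3 := bf_len_le h2 zero_lt_one
    simp only [List.length_append, List.length_map, List.length_cons, List.length_nil,
      hlen] at hlen3
    obtain ⟨u, hu⟩ := bf_align h2 zero_lt_one
    have hulen := hu.len
    simp only [List.length_append, List.length_map, List.length_cons, List.length_nil,
      hlen] at hulen
    have hFi : n + m < ((as.map (iotaP (L := L)) ++ [bEl false, bEl true]) ++ w₃).length := by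
      rw [List.length_append, hXlen]; omega
    have hF0 : n + 0 < ((as.map (iotaP (L := L)) ++ [bEl false, bEl true]) ++ w₃).length := by
      rw [List.length_append, hXlen]; omega
    have evF_z : ∀ hh, ((as.map (iotaP (L := L)) ++ [bEl false, bEl true]) ++ w₃)[n+m]'hh
        = w₃[m-2]'(by omega) := by
      intro hh
      rw [getElem_append_right'' (k := m-2) (by simp only [List.length_append, List.length_map, List.length_cons, List.length_nil]; omega) (by simp only [List.length_append, List.length_map, List.length_cons, List.length_nil]; omega)
        (by omega)]
    have evF_b0 : ∀ hh, ((as.map (iotaP (L := L)) ++ [bEl false, bEl true]) ++ w₃)[n+0]'hh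
        = bEl false := by
      intro hh
      rw [List.getElem_append_left (by simp only [List.length_append, List.length_map, List.length_cons, List.length_nil]; omega)]
      rw [getElem_idx_congr (show n + 0 = n by omega)]
      exact evX0 _
    have evG_z : ∀ hh, (((bs.map (iotaP (L := L)) ++ es₀) ++ [zS]) ++ u)[n+m]'hh = zS := by
      intro hh
      rw [List.getElem_append_left (by simp only [List.length_append, List.length_map, List.length_cons, List.length_nil]; omega)]
      rw [getElem_append_right'' (k := 0) (by simp only [List.length_append, List.length_map, List.length_cons, List.length_nil]; omega) (by simp only [List.length_append, List.length_map, List.length_cons, List.length_nil]; omega)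
        (by simp)]
      rfl
    have evG_e0 : ∀ hh, (((bs.map (iotaP (L := L)) ++ es₀) ++ [zS]) ++ u)[n+0]'hh
        = es₀[0] := by
      intro hh
      rw [List.getElem_append_left (by simp only [List.length_append, List.length_map, List.length_cons, List.length_nil]; omega)]
      rw [List.getElem_append_left (by simp only [List.length_append, List.length_map, List.length_cons, List.length_nil]; omega)]
      exact evYk 0 h0m _
    have c1 := hu.lt_iff' hFi hF0
    simp only [evF_z, evF_b0, evG_z, evG_e0] at c1
    have hz' : w₃[m-2]'(by omega) < bEl false := c1.mpr hz
    obtain ⟨l, hl⟩ := lt_b0_iff.mp hz'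
    obtain ⟨l', hl'⟩ := exists_gt l
    obtain ⟨es₄, h3⟩ := h2.move zero_lt_one [toLex (Sum.inl l')]
    have hq := h3.qf
    have hql := hq.len
    simp only [List.length_append, List.length_map, List.length_cons, List.length_nil,
      hlen] at hql
    -- hql : n + 2 + w₃.length + 1 = n + m + 1 + es₄.length
    have hAq : n + 2 + w₃.length < (((as.map (iotaP (L := L)) ++ [bEl false, bEl true]) ++ w₃)
        ++ [toLex (Sum.inl l')]).length := by
      simp only [List.length_append, hXlen, List.length_cons, List.length_nil]; omega
    have hAz : n + m < (((as.map (iotaP (L := L)) ++ [bEl false, bEl true]) ++ w₃)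
        ++ [toLex (Sum.inl l')]).length := by
      simp only [List.length_append, hXlen, List.length_cons, List.length_nil]; omega
    have hA0 : n + 0 < (((as.map (iotaP (L := L)) ++ [bEl false, bEl true]) ++ w₃)
        ++ [toLex (Sum.inl l')]).length := by
      simp only [List.length_append, hXlen, List.length_cons, List.length_nil]; omega
    have evA_w : ∀ hh, ((((as.map (iotaP (L := L)) ++ [bEl false, bEl true]) ++ w₃)
        ++ [toLex (Sum.inl l')]))[n+2+w₃.length]'hh = toLex (Sum.inl l') := by
      intro hh
      rw [getElem_append_right'' (k := 0) (by simp only [List.length_append, List.length_map, List.length_cons, List.length_nil]; omega)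
        (by simp only [List.length_append, List.length_map, List.length_cons, List.length_nil]; omega) (by simp)]
      rfl
    have evA_z : ∀ hh, ((((as.map (iotaP (L := L)) ++ [bEl false, bEl true]) ++ w₃)
        ++ [toLex (Sum.inl l')]))[n+m]'hh = w₃[m-2]'(by omega) := by
      intro hh
      rw [List.getElem_append_left (by simp only [List.length_append, List.length_map, List.length_cons, List.length_nil]; omega)]
      exact evF_z _
    have evA_b0 : ∀ hh, ((((as.map (iotaP (L := L)) ++ [bEl false, bEl true]) ++ w₃)
        ++ [toLex (Sum.inl l')]))[n+0]'hh = bEl false := by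
      intro hh
      rw [List.getElem_append_left (by simp only [List.length_append, List.length_map, List.length_cons, List.length_nil]; omega)]
      exact evF_b0 _
    have evB_w : ∀ hh, (((bs.map (iotaP (L := L)) ++ es₀) ++ [zS]) ++ es₄)[n+2+w₃.length]'hh
        = es₄[w₃.length + 1 - m]'(by omega) := by
      intro hh
      rw [getElem_append_right'' (k := w₃.length + 1 - m)
        (by simp only [List.length_append, hYlen, List.length_cons, List.length_nil]; omega)
        (by simp only [List.length_append, hYlen, List.length_cons, List.length_nil]; omega)
        (by omega)]
    have evB_z : ∀ hh, (((bs.map (iotaP (L := L)) ++ es₀) ++ [zS]) ++ es₄)[n+m]'hh = zS := by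
      intro hh
      rw [List.getElem_append_left (by simp only [List.length_append, List.length_map, List.length_cons, List.length_nil]; omega)]
      rw [getElem_append_right'' (k := 0) (by simp only [List.length_append, List.length_map, List.length_cons, List.length_nil]; omega) (by simp only [List.length_append, List.length_map, List.length_cons, List.length_nil]; omega)
        (by simp)]
      rfl
    have evB_e0 : ∀ hh, (((bs.map (iotaP (L := L)) ++ es₀) ++ [zS]) ++ es₄)[n+0]'hh
        = es₀[0] := by
      intro hh
      rw [List.getElem_append_left (by simp only [List.length_append, List.length_map, List.length_cons, List.length_nil]; omega)]
      rw [List.getElem_append_left (by simp only [List.length_append, List.length_map, List.length_cons, List.length_nil]; omega)]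
      exact evYk 0 h0m _
    have c2 := hq.lt_iff' hAz hAq
    simp only [evA_z, evA_w, evB_z, evB_w] at c2
    have c3 := hq.lt_iff' hAq hA0
    simp only [evA_w, evA_b0, evB_w, evB_e0] at c3
    have t1 : zS < es₄[w₃.length + 1 - m]'(by omega) := by
      apply c2.mp
      rw [hl]
      exact inlS_lt_inlS.mpr hl'
    have t2 : es₄[w₃.length + 1 - m]'(by omega) < es₀[0] := by
      apply c3.mp
      exact inlS_lt_bEl l' false
    exact hcov _ t1 t2
  -- refutation above e1
  have refAbove : ∀ zS : L ⊕ₗ (Bool ⊕ₗ P), es₀[1] < zS →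
      (∀ s, es₀[1] < s → s < zS → False) → False := by
    intro zS hz hcov
    obtain ⟨w₃, h2⟩ := h1.move (ord_one_lt_add_one hα) [zS]
    have hlen3 := bf_len_le h2 zero_lt_one
    simp only [List.length_append, List.length_map, List.length_cons, List.length_nil,
      hlen] at hlen3
    obtain ⟨u, hu⟩ := bf_align h2 zero_lt_one
    have hFi : n + m < ((as.map (iotaP (L := L)) ++ [bEl false, bEl true]) ++ w₃).length :=
      (by simp only [List.length_append, List.length_map, List.length_cons, List.length_nil]; omega)
    have hF1 : n + 1 < ((as.map (iotaP (L := L)) ++ [bEl false, bEl true]) ++ w₃).length :=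
      (by simp only [List.length_append, List.length_map, List.length_cons, List.length_nil]; omega)
    have evF_z : ∀ hh, ((as.map (iotaP (L := L)) ++ [bEl false, bEl true]) ++ w₃)[n+m]'hh
        = w₃[m-2]'(by omega) := by
      intro hh
      rw [getElem_append_right'' (k := m-2) (by simp only [List.length_append, List.length_map, List.length_cons, List.length_nil]; omega) (by simp only [List.length_append, List.length_map, List.length_cons, List.length_nil]; omega) (by omega)]
    have evF_b1 : ∀ hh, ((as.map (iotaP (L := L)) ++ [bEl false, bEl true]) ++ w₃)[n+1]'hh
        = bEl true := by
      intro hh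
      rw [List.getElem_append_left (by simp only [List.length_append, List.length_map, List.length_cons, List.length_nil]; omega)]
      exact evX1 _
    have evG_z : ∀ hh, (((bs.map (iotaP (L := L)) ++ es₀) ++ [zS]) ++ u)[n+m]'hh = zS := by
      intro hh
      rw [List.getElem_append_left (by simp only [List.length_append, List.length_map, List.length_cons, List.length_nil]; omega)]
      rw [getElem_append_right'' (k := 0) (by simp only [List.length_append, List.length_map, List.length_cons, List.length_nil]; omega) (by simp only [List.length_append, List.length_map, List.length_cons, List.length_nil]; omega) (by simp)]
      rfl
    have evG_e1 : ∀ hh, (((bs.map (iotaP (L := L)) ++ es₀) ++ [zS]) ++ u)[n+1]'hh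
        = es₀[1] := by
      intro hh
      rw [List.getElem_append_left (by simp only [List.length_append, List.length_map, List.length_cons, List.length_nil]; omega)]
      rw [List.getElem_append_left (by simp only [List.length_append, List.length_map, List.length_cons, List.length_nil]; omega)]
      exact evYk 1 h1m _
    have c1 := hu.lt_iff' hF1 hFi
    simp only [evF_z, evF_b1, evG_z, evG_e1] at c1
    have hz' : bEl true < w₃[m-2]'(by omega) := c1.mpr hz
    obtain ⟨p, hp⟩ := b1_lt_iff.mp hz'
    obtain ⟨p', hp'⟩ := exists_lt p
    obtain ⟨es₄, h3⟩ := h2.move zero_lt_one [iotaP p']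
    have hq := h3.qf
    have hql := hq.len
    simp only [List.length_append, List.length_map, List.length_cons, List.length_nil,
      hlen] at hql
    have hAq : n + 2 + w₃.length < (((as.map (iotaP (L := L)) ++ [bEl false, bEl true]) ++ w₃)
        ++ [iotaP p']).length := (by simp only [List.length_append, List.length_map, List.length_cons, List.length_nil]; omega)
    have hAz : n + m < (((as.map (iotaP (L := L)) ++ [bEl false, bEl true]) ++ w₃)
        ++ [iotaP p']).length := (by simp only [List.length_append, List.length_map, List.length_cons, List.length_nil]; omega)
    have hA1 : n + 1 < (((as.map (iotaP (L := L)) ++ [bEl false, bEl true]) ++ w₃)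
        ++ [iotaP p']).length := (by simp only [List.length_append, List.length_map, List.length_cons, List.length_nil]; omega)
    have evA_w : ∀ hh, ((((as.map (iotaP (L := L)) ++ [bEl false, bEl true]) ++ w₃)
        ++ [iotaP p']))[n+2+w₃.length]'hh = iotaP p' := by
      intro hh
      rw [getElem_append_right'' (k := 0) (by simp only [List.length_append, List.length_map, List.length_cons, List.length_nil]; omega) (by simp only [List.length_append, List.length_map, List.length_cons, List.length_nil]; omega) (by simp)]
      rfl
    have evA_z : ∀ hh, ((((as.map (iotaP (L := L)) ++ [bEl false, bEl true]) ++ w₃)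
        ++ [iotaP p']))[n+m]'hh = w₃[m-2]'(by omega) := by
      intro hh
      rw [List.getElem_append_left (by simp only [List.length_append, List.length_map, List.length_cons, List.length_nil]; omega)]
      exact evF_z _
    have evA_b1 : ∀ hh, ((((as.map (iotaP (L := L)) ++ [bEl false, bEl true]) ++ w₃)
        ++ [iotaP p']))[n+1]'hh = bEl true := by
      intro hh
      rw [List.getElem_append_left (by simp only [List.length_append, List.length_map, List.length_cons, List.length_nil]; omega)]
      exact evF_b1 _
    have evB_w : ∀ hh, (((bs.map (iotaP (L := L)) ++ es₀) ++ [zS]) ++ es₄)[n+2+w₃.length]'hh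
        = es₄[w₃.length + 1 - m]'(by omega) := by
      intro hh
      rw [getElem_append_right'' (k := w₃.length + 1 - m) (by simp only [List.length_append, List.length_map, List.length_cons, List.length_nil]; omega) (by simp only [List.length_append, List.length_map, List.length_cons, List.length_nil]; omega) (by omega)]
    have evB_z : ∀ hh, (((bs.map (iotaP (L := L)) ++ es₀) ++ [zS]) ++ es₄)[n+m]'hh = zS := by
      intro hh
      rw [List.getElem_append_left (by simp only [List.length_append, List.length_map, List.length_cons, List.length_nil]; omega)]
      rw [getElem_append_right'' (k := 0) (by simp only [List.length_append, List.length_map, List.length_cons, List.length_nil]; omega) (by simp only [List.length_append, List.length_map, List.length_cons, List.length_nil]; omega) (by simp)]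
      rfl
    have evB_e1 : ∀ hh, (((bs.map (iotaP (L := L)) ++ es₀) ++ [zS]) ++ es₄)[n+1]'hh
        = es₀[1] := by
      intro hh
      rw [List.getElem_append_left (by simp only [List.length_append, List.length_map, List.length_cons, List.length_nil]; omega)]
      rw [List.getElem_append_left (by simp only [List.length_append, List.length_map, List.length_cons, List.length_nil]; omega)]
      exact evYk 1 h1m _
    have c2 := hq.lt_iff' hA1 hAq
    simp only [evA_b1, evA_w, evB_e1, evB_w] at c2
    have c3 := hq.lt_iff' hAq hAz
    simp only [evA_w, evA_z, evB_w, evB_z] at c3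
    have t1 : es₀[1] < es₄[w₃.length + 1 - m]'(by omega) :=
      c2.mp (bEl_lt_iota true p')
    have t2 : es₄[w₃.length + 1 - m]'(by omega) < zS := by
      apply c3.mp
      rw [hp]
      exact iota_lt_iota.mpr hp'
    exact hcov _ t1 t2
  -- classification of (e0, e1)
  have hkey : es₀[1] = bEl true := by
    rcases S_cases (es₀[1]'(by omega)) with ⟨y, hy⟩ | hy | hy | ⟨y, hy⟩
    · exfalso
      have he01' := he01
      obtain ⟨x, hx⟩ := lt_inlS_iff (hy ▸ he01')
      rw [hx, hy] at he01'
      have hxy : x < y := inlS_lt_inlS.mp he01'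
      have hcovL : x ⋖ y := by
        refine ⟨hxy, fun c hc1 hc2 => hmid (toLex (Sum.inl c)) ?_ ?_⟩
        · rw [hx]; exact inlS_lt_inlS.mpr hc1
        · rw [hy]; exact inlS_lt_inlS.mpr hc2
      have hex : (∃ z, z ⋖ x) ∨ (∃ z, y ⋖ z) := by
        by_contra hno
        push_neg at hno
        exact hL x y ⟨hcovL, hno.1, hno.2⟩
      rcases hex with ⟨z, hzx⟩ | ⟨z, hyz⟩
      · refine refBelow (toLex (Sum.inl z)) ?_ ?_
        · rw [hx]; exact inlS_lt_inlS.mpr hzx.1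
        · intro s hs1 hs2
          rw [hx] at hs2
          obtain ⟨wl, hwl⟩ := lt_inlS_iff hs2
          rw [hwl] at hs1 hs2
          exact hzx.2 (inlS_lt_inlS.mp hs1) (inlS_lt_inlS.mp hs2)
      · refine refAbove (toLex (Sum.inl z)) ?_ ?_
        · rw [hy]; exact inlS_lt_inlS.mpr hyz.1
        · intro s hs1 hs2
          obtain ⟨wl, hwl⟩ := lt_inlS_iff hs2
          rw [hy] at hs1
          rw [hwl] at hs1 hs2
          exact hyz.2 (inlS_lt_inlS.mp hs1) (inlS_lt_inlS.mp hs2)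
    · exfalso
      have he01' := he01
      rw [hy] at he01'
      obtain ⟨x, hx⟩ := lt_b0_iff.mp he01'
      obtain ⟨x', hx'⟩ := exists_gt x
      refine hmid (toLex (Sum.inl x')) ?_ ?_
      · rw [hx]; exact inlS_lt_inlS.mpr hx'
      · rw [hy]; exact inlS_lt_bEl x' false
    · exact hy
    · exfalso
      rcases S_cases (es₀[0]'(by omega)) with ⟨x, hx⟩ | hx | hx | ⟨x, hx⟩
      · refine hmid (bEl false) ?_ ?_
        · rw [hx]; exact inlS_lt_bEl x false
        · rw [hy]; exact b0_lt_b1.trans (bEl_lt_iota true y)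
      · refine hmid (bEl true) ?_ ?_
        · rw [hx]; exact b0_lt_b1
        · rw [hy]; exact bEl_lt_iota true y
      · obtain ⟨q, hq⟩ := exists_lt y
        refine hmid (iotaP q) ?_ ?_
        · rw [hx]; exact bEl_lt_iota true q
        · rw [hy]; exact iota_lt_iota.mpr hq
      · have he01' := he01
        rw [hx, hy] at he01'
        have hxy : x < y := iota_lt_iota.mp he01'
        have hcovP : x ⋖ y := by
          refine ⟨hxy, fun c hc1 hc2 => hmid (iotaP c) ?_ ?_⟩
          · rw [hx]; exact iota_lt_iota.mpr hc1
          · rw [hy]; exact iota_lt_iota.mpr hc2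
        have hex : (∃ z, z ⋖ x) ∨ (∃ z, y ⋖ z) := by
          by_contra hno
          push_neg at hno
          exact hP x y ⟨hcovP, hno.1, hno.2⟩
        rcases hex with ⟨z, hzx⟩ | ⟨z, hyz⟩
        · refine refBelow (iotaP z) ?_ ?_
          · rw [hx]; exact iota_lt_iota.mpr hzx.1
          · intro s hs1 hs2
            obtain ⟨wp, hwp⟩ := b1_lt_iff.mp (lt_trans (bEl_lt_iota true z) hs1)
            rw [hwp] at hs1 hs2
            rw [hx] at hs2
            exact hzx.2 (iota_lt_iota.mp hs1) (iota_lt_iota.mp hs2)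
        · refine refAbove (iotaP z) ?_ ?_
          · rw [hy]; exact iota_lt_iota.mpr hyz.1
          · intro s hs1 hs2
            rw [hy] at hs1
            obtain ⟨wp, hwp⟩ := b1_lt_iff.mp (lt_trans (bEl_lt_iota true y) hs1)
            rw [hwp] at hs1 hs2
            exact hyz.2 (iota_lt_iota.mp hs1) (iota_lt_iota.mp hs2)
  exact ⟨es₀, h1, hm2, hkey⟩

end Pin

section Main

theorem bf_nil {P : Type} [LinearOrder P] (hE : IsEmpty P) :
    ∀ γ : Ordinal, BF (fun _ => (0:ℕ)) (fun _ => (0:ℕ)) γ ([] : List P) ([] : List P) := by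
  intro γ
  induction γ using Ordinal.induction with
  | h γ IH =>
  refine BF.mk (fun _ => ⟨rfl, fun i => i.elim0⟩) ?_
  intro β hβ ds
  refine ⟨[], ?_⟩
  have hds : ds = [] := by
    cases ds with
    | nil => rfl
    | cons d t => exact (hE.false d).elim
  subst hds
  simpa using IH β hβ

theorem sameQF_of_bf {L P : Type} [LinearOrder L] [LinearOrder P] {α : Ordinal}
    {as bs : List P} (hlen : as.length = bs.length)
    (h : BF (fun _ => (0:ℕ)) (fun _ => (0:ℕ)) α (bs.map (iotaP (L := L))) (as.map (iotaP (L := L))))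
    (hα : 0 < α) : SameQF (fun _ => (0:ℕ)) (fun _ => (0:ℕ)) as bs := by
  obtain ⟨u, hu⟩ := bf_align h hα
  refine ⟨hlen, ?_⟩
  intro i k
  refine ⟨?_, rfl⟩
  simp only [List.get_eq_getElem, Fin.coe_cast]
  have e1 : ∀ (ii : ℕ) (hii : ii < as.length) hh,
      (as.map (iotaP (L := L)))[ii]'hh = iotaP (as[ii]) := by
    intro ii hii hh; rw [List.getElem_map]
  have e2 : ∀ (ii : ℕ) (hii : ii < as.length) hh,
      ((bs.map (iotaP (L := L))) ++ u)[ii]'hh = iotaP (bs[ii]'(by omega)) := by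
    intro ii hii hh
    rw [List.getElem_append_left (by simp only [List.length_map]; omega), List.getElem_map]
  have hcmp := hu.le_iff' (i := i.1) (j := k.1)
    (by simpa using i.2) (by simpa using k.2)
  rw [e1 i.1 i.2, e1 k.1 k.2, e2 i.1 i.2, e2 k.1 k.2, iota_le_iota, iota_le_iota] at hcmp
  exact hcmp

end Main

/-- With L having no last element and no maximal successor chain of
length 2, and P having no first element and no maximal successor chain of length 2,
if ι(ā) ≡_{α+2} ι(b̄) in L + 2 + P then ā ≡_α b̄ in P. -/
theorem bf_equiv_unembed {L P : Type} [LinearOrder L] [LinearOrder P]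
    [NoMaxOrder L] [NoMinOrder P]
    (hL : ∀ x y : L, ¬ (x ⋖ y ∧ (∀ z : L, ¬ z ⋖ x) ∧ (∀ z : L, ¬ y ⋖ z)))
    (hP : ∀ x y : P, ¬ (x ⋖ y ∧ (∀ z : P, ¬ z ⋖ x) ∧ (∀ z : P, ¬ y ⋖ z)))
    (α : Ordinal) (as bs : List P)
    (h : BFEquiv (fun _ => 0) (fun _ => 0) (α + 2)
      (as.map (iotaP (L := L))) (bs.map (iotaP (L := L)))) :
    BFEquiv (fun _ => (0 : ℕ)) (fun _ => (0 : ℕ)) α as bs := by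
  obtain ⟨hab, hba⟩ := h
  have hlen : as.length = bs.length := by
    have l1 := bf_len_le hab (ord_pos_add_two α)
    have l2 := bf_len_le hba (ord_pos_add_two α)
    simp only [List.length_map] at l1 l2
    omega
  by_cases hPe : IsEmpty P
  · have ha : as = [] := by
      cases as with
      | nil => rfl
      | cons a t => exact (hPe.false a).elim
    have hb : bs = [] := by
      cases bs with
      | nil => rfl
      | cons a t => exact (hPe.false a).elim
    subst ha; subst hb
    exact ⟨bf_nil hPe α, bf_nil hPe α⟩
  · rw [not_isEmpty_iff] at hPe
    obtain ⟨pbar⟩ := hPe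
    rcases eq_or_ne α 0 with rfl | hα0
    · refine ⟨BF.mk (fun _ => ?_) (fun β hβ _ => absurd hβ (not_lt_of_ge zero_le)),
        BF.mk (fun _ => ?_) (fun β hβ _ => absurd hβ (not_lt_of_ge zero_le))⟩
      · exact sameQF_of_bf hlen hba (ord_pos_add_two 0)
      · exact sameQF_of_bf hlen.symm hab (ord_pos_add_two 0)
    · have hα : 1 ≤ α := Ordinal.one_le_iff_ne_zero.mpr hα0
      constructor
      · obtain ⟨es₀, h1, hm2, he1⟩ := pin hL hP α hα as bs hlen.symm hba
        refine claimA pbar α as bs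
          (as.map (iotaP (L := L)) ++ [bEl false, bEl true])
          (bs.map (iotaP (L := L)) ++ es₀)
          id (as.length + 1) h1 ?_ hlen ?_ ?_
        · simp only [List.length_append, List.length_map, List.length_cons, List.length_nil]
          omega
        · refine ⟨?_, ?_, ?_, ?_⟩
          · simp only [List.length_append, List.length_map, List.length_cons, List.length_nil]
            omega
          · simp only [List.length_append, List.length_map, List.length_cons, List.length_nil]
            omega
          · rw [getElem_append_right'' (k := 1)
              (by simp only [List.length_map]; omega)
              (by simp only [List.length_map]; omega) (by simp)]
            rfl
          · rw [getElem_append_right'' (k := 1)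
              (by simp only [List.length_map]; omega)
              (by simp only [List.length_map]; omega) (by omega)]
            exact he1
        · intro i hi
          have h1i : id i < (as.map (iotaP (L := L)) ++ [bEl false, bEl true]).length := by
            simp only [List.length_append, List.length_map, List.length_cons,
              List.length_nil, id]
            omega
          have h2i : id i < (bs.map (iotaP (L := L)) ++ es₀).length := by
            simp only [List.length_append, List.length_map, id]
            omega
          refine ⟨h1i, h2i, ?_, ?_⟩
          · rw [List.getElem_append_left (by simp only [List.length_map, id]; omega),
              List.getElem_map]
            rfl
          · rw [List.getElem_append_left (by simp only [List.length_map, id]; omega),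
              List.getElem_map]
            rfl
      · obtain ⟨es₀, h1, hm2, he1⟩ := pin hL hP α hα bs as hlen hab
        refine claimA pbar α bs as
          (bs.map (iotaP (L := L)) ++ [bEl false, bEl true])
          (as.map (iotaP (L := L)) ++ es₀)
          id (bs.length + 1) h1 ?_ hlen.symm ?_ ?_
        · simp only [List.length_append, List.length_map, List.length_cons, List.length_nil]
          omega
        · refine ⟨?_, ?_, ?_, ?_⟩
          · simp only [List.length_append, List.length_map, List.length_cons, List.length_nil]
            omega
          · simp only [List.length_append, List.length_map, List.length_cons, List.length_nil]
            omega
          · rw [getElem_append_right'' (k := 1)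
              (by simp only [List.length_map]; omega)
              (by simp only [List.length_map]; omega) (by simp)]
            rfl
          · rw [getElem_append_right'' (k := 1)
              (by simp only [List.length_map]; omega)
              (by simp only [List.length_map]; omega) (by omega)]
            exact he1
        · intro i hi
          have h1i : id i < (bs.map (iotaP (L := L)) ++ [bEl false, bEl true]).length := by
            simp only [List.length_append, List.length_map, List.length_cons,
              List.length_nil, id]
            omega
          have h2i : id i < (as.map (iotaP (L := L)) ++ es₀).length := by
            simp only [List.length_append, List.length_map, id]
            omega
          refine ⟨h1i, h2i, ?_, ?_⟩
          · rw [List.getElem_append_left (by simp only [List.length_map, id]; omega),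
              List.getElem_map]
            rfl
          · rw [List.getElem_append_left (by simp only [List.length_map, id]; omega),
              List.getElem_map]
            rfl
end
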